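/- arXiv:1806.02574 — 4 statements merged into one kernel-verified Lean document; each statement's English description precedes it below -/
import Mathlib

section
/- Let A be a set of at least d+2 points in general position in ℝ^d, and let B and C be disjoint subsets of A with |B| = b, |C| = c, 2 ≤ b, c ≤ d and b + c ≥ d + 2. If the relative interiors of the convex hulls of B and of C have a common point, then for any disjoint subsets B' and C' of A with B ⊆ B', C ⊆ C' and |B'|, |C'| ≤ d, the relative interiors of the convex hulls of B' and of C' also have a common point. -/
noncomputable section

/-- Points of `ℝ^d`. -/
abbrev Pt (d : ℕ) := EuclideanSpace ℝ (Fin d)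

/-- A finite point set is in general position in `ℝ^d` if every subset of at most
`d + 1` of its points is affinely independent. -/
def GenPos (d : ℕ) (V : Finset (Pt d)) : Prop :=
  ∀ S : Finset (Pt d), S ⊆ V → S.card ≤ d + 1 →
    AffineIndependent ℝ ((↑) : {x // x ∈ (S : Set (Pt d))} → Pt d)

/-- Two vertex-disjoint point sets form a crossing pair of simplices if the
relative (intrinsic) interiors of their convex hulls have a common point. -/
def CrossingPair (d : ℕ) (B C : Finset (Pt d)) : Prop :=
  Disjoint B C ∧
    (intrinsicInterior ℝ (convexHull ℝ (B : Set (Pt d))) ∩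
      intrinsicInterior ℝ (convexHull ℝ (C : Set (Pt d)))).Nonempty

/-- The set of unordered pairs `{B, C}` of disjoint `d`-element subsets of `V`
whose simplices cross: the crossing pairs of hyperedges. -/
def crossingHyperedgePairs (d : ℕ) (V : Finset (Pt d)) : Set (Sym2 (Finset (Pt d))) :=
  {p | ∃ B C : Finset (Pt d), p = s(B, C) ∧ B ⊆ V ∧ C ⊆ V ∧
        B.card = d ∧ C.card = d ∧ CrossingPair d B C}

open Finset AffineMap

set_option maxHeartbeats 1000000

local instance ptDecEq (d : ℕ) : DecidableEq (Pt d) := Classical.decEq _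

/-- finset-sort version of independence from GenPos -/
lemma genpos_indep_finset {d : ℕ} {A S : Finset (Pt d)} (hgp : GenPos d A)
    (hS : S ⊆ A) (hcard : S.card ≤ d + 1) :
    AffineIndependent ℝ (fun q : {x // x ∈ S} => (q : Pt d)) := by
  exact (hgp S hS hcard).comp_embedding
    ⟨fun q => ⟨q.1, q.2⟩, fun a b h => Subtype.ext (congrArg Subtype.val h)⟩

lemma genpos_zero_weights {d : ℕ} {A S : Finset (Pt d)} (hgp : GenPos d A)
    (hS : S ⊆ A) (hcard : S.card ≤ d + 1) {w : Pt d → ℝ}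
    (h0 : ∑ q ∈ S, w q = 0) (h1 : ∑ q ∈ S, w q • q = 0) : ∀ q ∈ S, w q = 0 := by
  have hind : AffineIndependent ℝ ((↑) : {x // x ∈ S} → Pt d) :=
    genpos_indep_finset hgp hS hcard
  exact hind.eq_zero_of_sum_eq_zero_subtype h0 h1

lemma exists_dep {d : ℕ} {A D : Finset (Pt d)} (hgp : GenPos d A)
    (hD : D ⊆ A) (hcard : D.card = d + 2) {p : Pt d} (hp : p ∈ D) :
    ∃ u : Pt d → ℝ, ∑ q ∈ D, u q = 0 ∧ ∑ q ∈ D, u q • q = 0 ∧ 0 < u p := by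
  classical
  have hni : ¬ AffineIndependent ℝ ((↑) : {x // x ∈ D} → Pt d) := by
    intro h
    have hc := h.card_le_finrank_succ
    rw [Fintype.card_coe] at hc
    have hle : Module.finrank ℝ (vectorSpan ℝ (Set.range ((↑) : {x // x ∈ D} → Pt d))) ≤ d := by
      calc Module.finrank ℝ (vectorSpan ℝ (Set.range ((↑) : {x // x ∈ D} → Pt d)))
          ≤ Module.finrank ℝ (Pt d) := Submodule.finrank_le _
        _ = d := finrank_euclideanSpace_fin
    omega
  obtain ⟨u, hu1, hu0, q0, hq0D, hq0⟩ := exists_nontrivial_relation_sum_zero_of_not_affine_ind hni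
  have hup : u p ≠ 0 := by
    intro hup
    have hTA : D.erase p ⊆ A := (erase_subset _ _).trans hD
    have hTc : (D.erase p).card ≤ d + 1 := by
      rw [card_erase_of_mem hp, hcard]; omega
    have hs0 : ∑ q ∈ D.erase p, u q = 0 := by
      have h := Finset.sum_erase_add D u hp
      rw [hu0] at h
      simpa [hup] using h
    have hs1 : ∑ q ∈ D.erase p, u q • q = 0 := by
      have h := Finset.sum_erase_add D (fun q => u q • q) hp
      rw [hu1] at h
      simpa [hup] using h
    have hz := genpos_zero_weights hgp hTA hTc hs0 hs1
    rcases eq_or_ne q0 p with rfl | hne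
    · exact hq0 hup
    · exact hq0 (hz q0 (mem_erase.2 ⟨hne, hq0D⟩))
  rcases hup.lt_or_gt with hlt | hlt
  · exact ⟨fun q => -u q, by simp [hu0], by simp [neg_smul, hu1], neg_pos.2 hlt⟩
  · exact ⟨u, hu0, hu1, hlt⟩

def WCross {d : ℕ} (B C : Finset (Pt d)) : Prop :=
  ∃ lam mu : Pt d → ℝ, (∀ q ∈ B, 0 < lam q) ∧ (∀ q ∈ C, 0 < mu q) ∧
    (∑ q ∈ B, lam q = 1) ∧ (∑ q ∈ C, mu q = 1) ∧
    ∑ q ∈ B, lam q • q = ∑ q ∈ C, mu q • q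

lemma wcross_insert {d : ℕ} {A B C : Finset (Pt d)} (hgp : GenPos d A)
    (hB : B ⊆ A) (hC : C ⊆ A) (hBC : Disjoint B C)
    (hsum : d + 2 ≤ B.card + C.card) {p : Pt d} (hpA : p ∈ A)
    (hpB : p ∉ B) (hpC : p ∉ C) (h : WCross B C) : WCross (insert p B) C := by
  classical
  obtain ⟨lam, mu, hlam, hmu, hlam1, hmu1, heq⟩ := h
  have hBCne : (B ∪ C).Nonempty := by
    rw [← Finset.card_pos, Finset.card_union_of_disjoint hBC]; omega
  have hTcard : d + 1 ≤ (B ∪ C).card := by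
    rw [Finset.card_union_of_disjoint hBC]; omega
  obtain ⟨T, hTsub, hTc⟩ := Finset.exists_subset_card_eq hTcard
  have hpT : p ∉ T := fun hpT => by
    rcases Finset.mem_union.1 (hTsub hpT) with h | h
    exacts [hpB h, hpC h]
  set D : Finset (Pt d) := insert p T with hD
  have hDA : D ⊆ A := by
    intro q hq; rcases Finset.mem_insert.1 hq with rfl | hq
    · exact hpA
    · rcases Finset.mem_union.1 (hTsub hq) with h | h
      exacts [hB h, hC h]
  have hDc : D.card = d + 2 := by rw [Finset.card_insert_of_notMem hpT, hTc]
  obtain ⟨u, hu0, hu1, hup⟩ := exists_dep hgp hDA hDc (Finset.mem_insert_self p T)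
  set v : Pt d → ℝ := fun q => if q ∈ D then u q else 0 with hv
  set E : Finset (Pt d) := insert p (B ∪ C) with hE
  have hDE : D ⊆ E := Finset.insert_subset_insert _ hTsub
  have hBE : B ⊆ E := (Finset.subset_union_left).trans (Finset.subset_insert _ _)
  have hCE : C ⊆ E := (Finset.subset_union_right).trans (Finset.subset_insert _ _)
  have hvD : ∀ q ∈ D, v q = u q := fun q hq => if_pos hq
  have hvnD : ∀ q ∉ D, v q = 0 := fun q hq => if_neg hq
  have hvp : v p = u p := hvD p (Finset.mem_insert_self p T)
  have hv0 : ∑ q ∈ E, v q = 0 := by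
    rw [← Finset.sum_subset hDE (fun x _ hx => hvnD x hx)]
    rw [Finset.sum_congr rfl (fun x hx => hvD x hx), hu0]
  have hv1 : ∑ q ∈ E, v q • q = 0 := by
    have h1 : ∑ q ∈ D, v q • q = ∑ q ∈ E, v q • q :=
      Finset.sum_subset hDE (fun x _ hx => by rw [hvnD x hx, zero_smul])
    rw [← h1, Finset.sum_congr rfl (fun x hx => by rw [hvD x hx]), hu1]
  -- choose t
  set m : ℝ := (B ∪ C).inf' hBCne (fun q => if q ∈ B then lam q else mu q) with hm
  have hmpos : 0 < m := by
    rw [hm, Finset.lt_inf'_iff]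
    intro q hq
    by_cases hqB : q ∈ B
    · rw [if_pos hqB]; exact hlam q hqB
    · rw [if_neg hqB]
      exact hmu q ((Finset.mem_union.1 hq).resolve_left hqB)
  have hmle : ∀ q ∈ B, m ≤ lam q := fun q hq => by
    have := Finset.inf'_le (fun q => if q ∈ B then lam q else mu q)
      (Finset.mem_union_left C hq)
    rwa [if_pos hq] at this
  have hmle' : ∀ q ∈ C, m ≤ mu q := fun q hq => by
    have h2 := Finset.inf'_le (fun q => if q ∈ B then lam q else mu q)
      (Finset.mem_union_right B hq)
    rwa [if_neg (Finset.disjoint_right.1 hBC hq)] at h2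
  set K : ℝ := (B ∪ C).sup' hBCne (fun q => |v q|) + 1 with hK
  have hKbd : ∀ q ∈ B ∪ C, |v q| ≤ K - 1 := fun q hq => by
    rw [hK]; ring_nf
    have := Finset.le_sup' (fun q => |v q|) hq
    exact this
  have hKpos : 0 < K := by
    have := hKbd _ hBCne.choose_spec
    have h3 : 0 ≤ |v hBCne.choose| := abs_nonneg _
    linarith
  set t : ℝ := m / K with ht
  have htpos : 0 < t := div_pos hmpos hKpos
  have htb : ∀ q ∈ B ∪ C, t * |v q| < m := fun q hq => by
    have h4 := hKbd q hq
    have h5 : t * |v q| ≤ t * (K - 1) := by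
      apply mul_le_mul_of_nonneg_left h4 htpos.le
    have h6 : t * (K - 1) < t * K := by
      apply mul_lt_mul_of_pos_left _ htpos; linarith
    have h7 : t * K = m := by rw [ht]; field_simp
    linarith
  -- the perturbed weights
  set f : Pt d → ℝ :=
    fun q => (if q ∈ B then lam q else 0) - (if q ∈ C then mu q else 0) + t * v q with hf
  have hfB : ∀ q ∈ B, 0 < f q := fun q hq => by
    have hqC : q ∉ C := Finset.disjoint_left.1 hBC hq
    have h8 := htb q (Finset.mem_union_left C hq)
    have h9 : -(t * |v q|) ≤ t * v q := by
      have := neg_abs_le (v q)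
      nlinarith
    have := hmle q hq
    rw [hf]; simp only [if_pos hq, if_neg hqC]
    nlinarith
  have hfp : 0 < f p := by
    rw [hf]; simp only [if_neg hpB, if_neg hpC, hvp]
    have : 0 < t * u p := mul_pos htpos hup
    linarith
  have hfC : ∀ q ∈ C, f q < 0 := fun q hq => by
    have hqB : q ∉ B := Finset.disjoint_right.1 hBC hq
    have h8 := htb q (Finset.mem_union_right B hq)
    have h9 : t * v q ≤ t * |v q| := by
      have := le_abs_self (v q)
      nlinarith
    have := hmle' q hq
    rw [hf]; simp only [if_neg hqB, if_pos hq]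
    nlinarith
  -- sum identities
  have hsumB : ∑ q ∈ E, (if q ∈ B then lam q else 0) = 1 := by
    rw [← Finset.sum_subset hBE (fun x _ hx => if_neg hx),
      Finset.sum_congr rfl (fun x hx => if_pos hx), hlam1]
  have hsumC : ∑ q ∈ E, (if q ∈ C then mu q else 0) = 1 := by
    rw [← Finset.sum_subset hCE (fun x _ hx => if_neg hx),
      Finset.sum_congr rfl (fun x hx => if_pos hx), hmu1]
  have hEf : ∑ q ∈ E, f q = 0 := by
    rw [hf]
    simp only [Finset.sum_add_distrib, Finset.sum_sub_distrib, ← Finset.mul_sum]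
    rw [hsumB, hsumC, hv0]
    ring
  have hsumB1 : ∑ q ∈ E, (if q ∈ B then lam q else 0) • q = ∑ q ∈ B, lam q • q := by
    rw [← Finset.sum_subset hBE (fun x _ hx => by rw [if_neg hx, zero_smul])]
    exact Finset.sum_congr rfl (fun x hx => by rw [if_pos hx])
  have hsumC1 : ∑ q ∈ E, (if q ∈ C then mu q else 0) • q = ∑ q ∈ C, mu q • q := by
    rw [← Finset.sum_subset hCE (fun x _ hx => by rw [if_neg hx, zero_smul])]
    exact Finset.sum_congr rfl (fun x hx => by rw [if_pos hx])
  have hEf1 : ∑ q ∈ E, f q • q = 0 := by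
    rw [hf]
    have expand : ∀ q : Pt d,
        ((if q ∈ B then lam q else 0) - (if q ∈ C then mu q else 0) + t * v q) • q
        = (if q ∈ B then lam q else 0) • q - (if q ∈ C then mu q else 0) • q
          + t • (v q • q) := by
      intro q; rw [add_smul, sub_smul, mul_smul]
    rw [Finset.sum_congr rfl (fun q _ => expand q)]
    rw [Finset.sum_add_distrib, Finset.sum_sub_distrib, ← Finset.smul_sum]
    rw [hsumB1, hsumC1, hv1, heq]
    simp
  -- split E
  have hEsplit : E = insert p B ∪ C := by
    rw [hE, Finset.insert_union]
  have hdisj : Disjoint (insert p B) C := by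
    rw [Finset.disjoint_left]
    intro q hq
    rcases Finset.mem_insert.1 hq with rfl | hq
    · exact hpC
    · exact Finset.disjoint_left.1 hBC hq
  have hsplit0 : ∑ q ∈ insert p B, f q + ∑ q ∈ C, f q = 0 := by
    rw [← Finset.sum_union hdisj, ← hEsplit, hEf]
  have hsplit1 : ∑ q ∈ insert p B, f q • q + ∑ q ∈ C, f q • q = 0 := by
    rw [← Finset.sum_union hdisj, ← hEsplit, hEf1]
  set s : ℝ := ∑ q ∈ insert p B, f q with hs
  have hspos : 0 < s := by
    rw [hs]
    apply Finset.sum_pos _ (Finset.insert_nonempty p B)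
    intro q hq
    rcases Finset.mem_insert.1 hq with rfl | hq
    · exact hfp
    · exact hfB q hq
  refine ⟨fun q => f q / s, fun q => -f q / s, ?_, ?_, ?_, ?_, ?_⟩
  · intro q hq
    apply div_pos _ hspos
    rcases Finset.mem_insert.1 hq with rfl | hq
    · exact hfp
    · exact hfB q hq
  · intro q hq
    apply div_pos _ hspos
    have := hfC q hq; linarith
  · rw [← Finset.sum_div, ← hs, div_self hspos.ne']
  · rw [← Finset.sum_div]
    have h10 : ∑ q ∈ C, -f q = s := by
      rw [Finset.sum_neg_distrib]; linarith
    rw [h10, div_self hspos.ne']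
  · have e1 : ∀ q : Pt d, (f q / s) • q = s⁻¹ • (f q • q) := by
      intro q; rw [div_eq_inv_mul, mul_smul]
    have e2 : ∀ q : Pt d, (-f q / s) • q = s⁻¹ • ((-f q) • q) := by
      intro q; rw [div_eq_inv_mul, mul_smul]
    rw [Finset.sum_congr rfl (fun q _ => e1 q), Finset.sum_congr rfl (fun q _ => e2 q),
      ← Finset.smul_sum, ← Finset.smul_sum]
    congr 1
    have h11 : ∑ q ∈ C, (-f q) • q = -∑ q ∈ C, f q • q := by
      rw [← Finset.sum_neg_distrib]
      exact Finset.sum_congr rfl (fun q _ => neg_smul _ _)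
    rw [h11]
    exact eq_neg_of_add_eq_zero_left hsplit1

set_option maxHeartbeats 2000000 in
lemma mem_relint_simplex {d : ℕ} (s : Finset (Pt d)) (hne : s.Nonempty)
    (hind : AffineIndependent ℝ ((↑) : {x // x ∈ (s : Set (Pt d))} → Pt d)) (x : Pt d) :
    x ∈ intrinsicInterior ℝ (convexHull ℝ (s : Set (Pt d))) ↔
      ∃ w : Pt d → ℝ, (∀ q ∈ s, 0 < w q) ∧ ∑ q ∈ s, w q = 1 ∧ ∑ q ∈ s, w q • q = x := by
  classical
  set P : AffineSubspace ℝ (Pt d) := affineSpan ℝ (convexHull ℝ (s : Set (Pt d))) with hP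
  have hsub : ∀ q ∈ s, q ∈ P := fun q hq => subset_affineSpan ℝ _ (subset_convexHull ℝ _ hq)
  haveI : Nonempty P := ⟨⟨hne.choose, hsub _ hne.choose_spec⟩⟩
  have hind' : AffineIndependent ℝ (fun q : {x // x ∈ s} => (q : Pt d)) := by
    exact hind.comp_embedding
      ⟨fun q => ⟨q.1, q.2⟩, fun a b h => Subtype.ext (congrArg Subtype.val h)⟩
  set pts : {x // x ∈ s} → P := fun q => ⟨q.1, hsub q.1 q.2⟩ with hpts
  have hcomp : (P.subtype : P →ᵃ[ℝ] Pt d) ∘ pts = (fun q : {x // x ∈ s} => (q : Pt d)) := rfl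
  have hindP : AffineIndependent ℝ pts :=
    AffineIndependent.of_comp P.subtype (by rw [hcomp]; exact hind')
  have himg : (P.subtype : P →ᵃ[ℝ] Pt d) '' Set.range pts = (s : Set (Pt d)) := by
    ext q; constructor
    · rintro ⟨z, ⟨i, rfl⟩, rfl⟩; exact i.2
    · intro hq; exact ⟨pts ⟨q, hq⟩, ⟨⟨q, hq⟩, rfl⟩, rfl⟩
  have htot : affineSpan ℝ (Set.range pts) = ⊤ := by
    rw [eq_top_iff]
    rintro y -
    have hy : (y : Pt d) ∈ affineSpan ℝ ((P.subtype : P →ᵃ[ℝ] Pt d) '' Set.range pts) := by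
      rw [himg, ← affineSpan_convexHull]; exact y.2
    rw [← AffineSubspace.map_span] at hy
    obtain ⟨z, hz, hzy⟩ := hy
    rwa [show z = y from Subtype.coe_injective hzy] at hz
  set b : AffineBasis {x // x ∈ s} ℝ P := ⟨pts, hindP, htot⟩ with hb
  -- combination lemma
  have hcombo : ∀ w : Pt d → ℝ, ∑ q ∈ s, w q = 1 →
      ((s.attach.affineCombination ℝ b (fun i => w i.1) : P) : Pt d) = ∑ q ∈ s, w q • q := by
    intro w hw
    have hw' : ∑ i ∈ s.attach, w i.1 = 1 := by rwa [Finset.sum_attach]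
    have h1 : (P.subtype : P →ᵃ[ℝ] Pt d) (s.attach.affineCombination ℝ b (fun i => w i.1))
        = s.attach.affineCombination ℝ (fun i : {x // x ∈ s} => (i : Pt d)) (fun i => w i.1) :=
      Finset.map_affineCombination s.attach b (fun i => w i.1) hw' P.subtype
    rw [show ((s.attach.affineCombination ℝ b (fun i => w i.1) : P) : Pt d)
        = (P.subtype : P →ᵃ[ℝ] Pt d) (s.attach.affineCombination ℝ b (fun i => w i.1)) from rfl,
      h1, Finset.affineCombination_eq_linear_combination _ _ _ hw',
      ← Finset.sum_attach s (fun q => w q • q)]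
  -- nonneg coords on hull
  have hnonneg : ∀ z : P, (z : Pt d) ∈ convexHull ℝ (s : Set (Pt d)) →
      ∀ i, 0 ≤ b.coord i z := by
    intro z hz i
    rw [Finset.convexHull_eq] at hz
    obtain ⟨w, hw0, hw1, hwz⟩ := hz
    rw [s.centerMass_eq_of_sum_1 _ hw1] at hwz
    have hzc : z = s.attach.affineCombination ℝ b (fun i => w i.1) := by
      apply Subtype.coe_injective
      show (z : Pt d) = ((s.attach.affineCombination ℝ b (fun i => w i.1) : P) : Pt d)
      rw [hcombo w hw1]
      simp only [_root_.id] at hwz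
      exact hwz.symm
    rw [hzc, AffineBasis.coord_apply_combination_of_mem _ (s.mem_attach i)
      (by rwa [Finset.sum_attach])]
    exact hw0 _ i.2
  have hattach : (Finset.univ : Finset {x // x ∈ s}) = s.attach := Finset.univ_eq_attach s
  constructor
  · rintro ⟨y, hy, rfl⟩
    have hymem := interior_subset hy
    refine ⟨fun q => if hq : q ∈ s then b.coord ⟨q, hq⟩ y else 0, ?_, ?_, ?_⟩
    · intro q hq
      simp only [hq, dif_pos]
      set i : {x // x ∈ s} := ⟨q, hq⟩
      rcases lt_or_eq_of_le (hnonneg y hymem i) with h | h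
      · exact h
      exfalso
      have hyi : dist y (b i) ≠ 0 := by
        intro h0
        rw [dist_eq_zero] at h0
        rw [h0, AffineBasis.coord_apply_eq] at h
        exact one_ne_zero h.symm
      obtain ⟨ε, hε, hball⟩ := Metric.mem_nhds_iff.1 (mem_interior_iff_mem_nhds.1 hy)
      set δ : ℝ := ε / (2 * dist y (b i))
      have hdistpos : 0 < dist y (b i) := lt_of_le_of_ne dist_nonneg (Ne.symm hyi)
      have hδ : 0 < δ := div_pos hε (by positivity)
      set y' : P := AffineMap.lineMap y (b i) (-δ)
      have hy'ball : y' ∈ Metric.ball y ε := by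
        rw [Metric.mem_ball, dist_lineMap_left, norm_neg, Real.norm_of_nonneg hδ.le,
          div_mul_eq_mul_div, mul_comm, div_lt_iff₀ (by positivity)]
        nlinarith [hε, hdistpos]
      have hy'cv : (y' : Pt d) ∈ convexHull ℝ (s : Set (Pt d)) := hball hy'ball
      have hcv := hnonneg y' hy'cv i
      rw [show y' = AffineMap.lineMap y (b i) (-δ) from rfl,
        AffineMap.apply_lineMap, AffineBasis.coord_apply_eq, ← h] at hcv
      simp only [AffineMap.lineMap_apply_module, smul_eq_mul] at hcv
      nlinarith [hcv, hδ]
    · rw [← Finset.sum_attach s]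
      have : ∀ i ∈ s.attach, (if hq : (i : Pt d) ∈ s then b.coord ⟨i.1, hq⟩ y else 0)
          = b.coord i y := by
        intro i _
        rw [dif_pos i.2]
      rw [Finset.sum_congr rfl this, ← hattach, b.sum_coord_apply_eq_one y]
    · have hy1 : ∑ q ∈ s, (if hq : q ∈ s then b.coord ⟨q, hq⟩ y else 0) = 1 := by
        rw [← Finset.sum_attach s]
        have : ∀ i ∈ s.attach, (if hq : (i : Pt d) ∈ s then b.coord ⟨i.1, hq⟩ y else 0)
            = b.coord i y := fun i _ => by rw [dif_pos i.2]
        rw [Finset.sum_congr rfl this, ← hattach, b.sum_coord_apply_eq_one y]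
      rw [← hcombo _ hy1]
      congr 1
      have h2 : s.attach.affineCombination ℝ b
          (fun i => if hq : (i : Pt d) ∈ s then b.coord ⟨i.1, hq⟩ y else 0)
          = s.attach.affineCombination ℝ b (fun i => b.coord i y) := by
        apply Finset.affineCombination_congr
        · intro i _; rw [dif_pos i.2]
        · intro i _; rfl
      rw [h2, ← hattach, b.affineCombination_coord_eq_self y]
  · rintro ⟨w, hw0, hw1, hwx⟩
    set y : P := s.attach.affineCombination ℝ b (fun i => w i.1) with hy
    have hyx : (y : Pt d) = x := by rw [hy]; rw [hcombo w hw1]; exact hwx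
    set U : Set P := {z | ∀ i, 0 < b.coord i z} with hU
    have hUopen : IsOpen U := by
      have : U = ⋂ i, {z | 0 < b.coord i z} := by ext z; simp [hU]
      rw [this]
      exact isOpen_iInter_of_finite fun i =>
        isOpen_lt continuous_const (b.coord i).continuous_of_finiteDimensional
    have hUsub : U ⊆ ((↑) ⁻¹' (convexHull ℝ (s : Set (Pt d))) : Set P) := by
      intro z hz
      have hzc := b.affineCombination_coord_eq_self z
      have h3 : (z : Pt d) = Finset.univ.affineCombination ℝ
          (fun i : {x // x ∈ s} => ((b i : P) : Pt d)) (fun i => b.coord i z) := by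
        conv_lhs => rw [← hzc]
        exact Finset.map_affineCombination _ b _ (b.sum_coord_apply_eq_one z) P.subtype
      rw [Set.mem_preimage, h3]
      have hmem := affineCombination_mem_convexHull (s := (Finset.univ : Finset _))
        (v := fun i : {x // x ∈ s} => ((b i : P) : Pt d)) (w := fun i => b.coord i z)
        (fun i _ => (hz i).le) (b.sum_coord_apply_eq_one z)
      have hrange : Set.range (fun i : {x // x ∈ s} => ((b i : P) : Pt d))
          = (s : Set (Pt d)) := by
        ext q; constructor
        · rintro ⟨i, rfl⟩; exact i.2
        · intro hq; exact ⟨⟨q, hq⟩, rfl⟩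
      rwa [hrange] at hmem
    have hyU : y ∈ U := by
      intro i
      rw [hy, AffineBasis.coord_apply_combination_of_mem _ (s.mem_attach i)
        (by rwa [Finset.sum_attach])]
      exact hw0 _ i.2
    exact ⟨y, interior_maximal hUsub hUopen hyU, hyx⟩

lemma wcross_swap {d : ℕ} {B C : Finset (Pt d)} (h : WCross B C) : WCross C B := by
  obtain ⟨l, m, h1, h2, h3, h4, h5⟩ := h
  exact ⟨m, l, h2, h1, h4, h3, h5.symm⟩

lemma wcross_union {d : ℕ} {A B C : Finset (Pt d)} (hgp : GenPos d A)
    (hB : B ⊆ A) (hC : C ⊆ A) (hBC : Disjoint B C) (hsum : d + 2 ≤ B.card + C.card)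
    (S : Finset (Pt d)) :
    S ⊆ A → Disjoint S (B ∪ C) → WCross B C → WCross (B ∪ S) C := by
  classical
  induction S using Finset.induction_on with
  | empty => intro _ _ h; simpa using h
  | @insert a S haS ih =>
    intro hSA hSd h
    have hSA' : S ⊆ A := (Finset.subset_insert a S).trans hSA
    have hSd' : Disjoint S (B ∪ C) :=
      Finset.disjoint_of_subset_left (Finset.subset_insert a S) hSd
    have hW : WCross (B ∪ S) C := ih hSA' hSd' h
    have haBC : a ∉ B ∪ C := Finset.disjoint_left.1 hSd (Finset.mem_insert_self a S)
    have haB : a ∉ B := fun h' => haBC (Finset.mem_union_left _ h')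
    have haC : a ∉ C := fun h' => haBC (Finset.mem_union_right _ h')
    have haBS : a ∉ B ∪ S := by
      intro h'
      rcases Finset.mem_union.1 h' with h' | h'
      exacts [haB h', haS h']
    have hdisj2 : Disjoint (B ∪ S) C := by
      rw [Finset.disjoint_union_left]
      refine ⟨hBC, ?_⟩
      rw [Finset.disjoint_left]
      intro q hq hqC
      exact Finset.disjoint_left.1 hSd' hq (Finset.mem_union_right _ hqC)
    have hsum2 : d + 2 ≤ (B ∪ S).card + C.card :=
      hsum.trans (Nat.add_le_add_right (Finset.card_le_card Finset.subset_union_left) _)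
    have hres := wcross_insert hgp (Finset.union_subset hB hSA') hC hdisj2 hsum2
      (hSA (Finset.mem_insert_self a S)) haBS haC hW
    rwa [Finset.union_insert]

lemma wcross_iff_relint {d : ℕ} {A B C : Finset (Pt d)} (hgp : GenPos d A)
    (hB : B ⊆ A) (hC : C ⊆ A) (hb : B.card ≤ d + 1) (hc : C.card ≤ d + 1)
    (hBne : B.Nonempty) (hCne : C.Nonempty) :
    (intrinsicInterior ℝ (convexHull ℝ (B : Set (Pt d))) ∩
      intrinsicInterior ℝ (convexHull ℝ (C : Set (Pt d)))).Nonempty ↔ WCross B C := by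
  constructor
  · rintro ⟨x, hxB, hxC⟩
    obtain ⟨l, hl, hl1, hlx⟩ := (mem_relint_simplex B hBne (hgp B hB hb) x).1 hxB
    obtain ⟨m, hm, hm1, hmx⟩ := (mem_relint_simplex C hCne (hgp C hC hc) x).1 hxC
    exact ⟨l, m, hl, hm, hl1, hm1, by rw [hlx, hmx]⟩
  · rintro ⟨l, m, hl, hm, hl1, hm1, heq⟩
    refine ⟨∑ q ∈ B, l q • q, ?_, ?_⟩
    · exact (mem_relint_simplex B hBne (hgp B hB hb) _).2 ⟨l, hl, hl1, rfl⟩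
    · exact (mem_relint_simplex C hCne (hgp C hC hc) _).2 ⟨m, hm, hm1, heq.symm⟩

/-- Lemma 1 (extension lemma): a crossing pair of simplices on `B` and `C` with
`|B| + |C| ≥ d + 2` extends to a crossing pair for any disjoint supersets
`B' ⊇ B`, `C' ⊇ C` of size at most `d` inside the general-position set `A`. -/
theorem crossing_extension
    (d : ℕ) (A B C B' C' : Finset (Pt d))
    (hA : d + 2 ≤ A.card) (hgp : GenPos d A)
    (hB : B ⊆ A) (hC : C ⊆ A) (hBC : Disjoint B C)
    (hb2 : 2 ≤ B.card) (hbd : B.card ≤ d)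
    (hc2 : 2 ≤ C.card) (hcd : C.card ≤ d)
    (hsum : d + 2 ≤ B.card + C.card)
    (hcross : (intrinsicInterior ℝ (convexHull ℝ (B : Set (Pt d))) ∩
        intrinsicInterior ℝ (convexHull ℝ (C : Set (Pt d)))).Nonempty)
    (hB' : B' ⊆ A) (hC' : C' ⊆ A) (hBC' : Disjoint B' C')
    (hBB' : B ⊆ B') (hCC' : C ⊆ C')
    (hbd' : B'.card ≤ d) (hcd' : C'.card ≤ d) :
    (intrinsicInterior ℝ (convexHull ℝ (B' : Set (Pt d))) ∩
      intrinsicInterior ℝ (convexHull ℝ (C' : Set (Pt d)))).Nonempty := by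
  classical
  have hBne : B.Nonempty := Finset.card_pos.1 (by omega)
  have hCne : C.Nonempty := Finset.card_pos.1 (by omega)
  have hBne' : B'.Nonempty := hBne.mono hBB'
  have hCne' : C'.Nonempty := hCne.mono hCC'
  have hW : WCross B C := (wcross_iff_relint hgp hB hC (by omega) (by omega) hBne hCne).1 hcross
  -- extend B to B'
  have hdisjBC' : Disjoint B C := hBC
  have hS1A : B' \ B ⊆ A := (Finset.sdiff_subset).trans hB'
  have hS1d : Disjoint (B' \ B) (B ∪ C) := by
    rw [Finset.disjoint_union_right]
    refine ⟨Finset.sdiff_disjoint, ?_⟩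
    exact Finset.disjoint_of_subset_left Finset.sdiff_subset
      (Finset.disjoint_of_subset_right hCC' hBC')
  have hW1 : WCross B' C := by
    have := wcross_union hgp hB hC hBC hsum (B' \ B) hS1A hS1d hW
    rwa [Finset.union_sdiff_of_subset hBB'] at this
  -- extend C to C'
  have hW1' : WCross C B' := wcross_swap hW1
  have hsum2 : d + 2 ≤ C.card + B'.card := by
    have := Finset.card_le_card hBB'; omega
  have hdisjCB' : Disjoint C B' :=
    (Finset.disjoint_of_subset_right hCC' hBC').symm
  have hS2A : C' \ C ⊆ A := (Finset.sdiff_subset).trans hC'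
  have hS2d : Disjoint (C' \ C) (C ∪ B') := by
    rw [Finset.disjoint_union_right]
    refine ⟨Finset.sdiff_disjoint, ?_⟩
    exact Finset.disjoint_of_subset_left Finset.sdiff_subset hBC'.symm
  have hW2 : WCross C' B' := by
    have := wcross_union hgp hC hB' hdisjCB' hsum2 (C' \ C) hS2A hS2d hW1'
    rwa [Finset.union_sdiff_of_subset hCC'] at this
  exact (wcross_iff_relint hgp hB' hC' (by omega) (by omega) hBne' hCne').2 (wcross_swap hW2)
end
end

section
/- Let m ≥ 4 and let g₁, …, g_m be vectors in ℝ³ such that every 3 of them are linearly independent. Then there exists a vector v ∈ ℝ³ such that exactly ⌈m/2⌉ of the vectors g_i satisfy ⟨v, g_i⟩ > 0, exactly ⌊m/2⌋ of them satisfy ⟨v, g_i⟩ < 0, and none satisfies ⟨v, g_i⟩ = 0. (That is, the vectors admit a proper linear separation: a linear hyperplane through the origin with ⌈m/2⌉ of the vectors strictly on one side and ⌊m/2⌋ strictly on the other.) -/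
noncomputable section

attribute [local instance] Classical.propDecidable

open scoped RealInnerProductSpace

/-- Points of `ℝ³`. -/
abbrev Pt3 := EuclideanSpace ℝ (Fin 3)

private lemma pos_mul_iff_aux {b c d : ℝ} (h : 0 < c * d) : 0 < b * c ↔ 0 < b * d := by
  constructor <;> intro hb <;> nlinarith [mul_pos hb h, sq_nonneg c, sq_nonneg d]

private lemma card_le_erase_add_one {γ : Type*} [DecidableEq γ] (s : Finset γ) (a : γ) :
    s.card ≤ (s.erase a).card + 1 := by
  by_cases h : a ∈ s
  · have h1 := Finset.card_erase_of_mem h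
    have h2 := Finset.card_pos.2 ⟨a, h⟩
    omega
  · rw [Finset.erase_eq_of_notMem h]
    omega

private lemma exists_inner_ne_zero {ι : Type*} (s : Finset ι) (w : ι → Pt3)
    (hw : ∀ i ∈ s, w i ≠ 0) : ∃ a : Pt3, ∀ i ∈ s, ⟪a, w i⟫ ≠ 0 := by
  by_contra hcon
  push_neg at hcon
  have hcov : ⋃ i : {i // i ∈ s}, (((ℝ ∙ w i.1)ᗮ : Submodule ℝ Pt3) : Set Pt3) = Set.univ := by
    apply Set.eq_univ_of_forall
    intro a
    obtain ⟨i, his, hi⟩ := hcon a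
    exact Set.mem_iUnion.2 ⟨⟨i, his⟩, Submodule.mem_orthogonal_singleton_iff_inner_left.2 hi⟩
  obtain ⟨i, hi⟩ := Subspace.exists_eq_top_of_iUnion_eq_univ hcov
  have hmem : w i.1 ∈ ((ℝ ∙ w i.1)ᗮ : Submodule ℝ Pt3) := by rw [hi]; trivial
  have h0 := Submodule.mem_orthogonal_singleton_iff_inner_left.1 hmem
  exact hw i.1 i.2 (inner_self_eq_zero.1 h0)

private lemma discrete_ivt (roots : Finset ℝ) (C : ℝ → ℕ) (z : ℝ)
    (hz : ∀ r ∈ roots, r < z) (T : ℕ)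
    (H : ∀ x y : ℝ, x ≤ y →
      (∀ r₁ ∈ roots, ∀ r₂ ∈ roots, x ≤ r₁ → r₁ ≤ y → x ≤ r₂ → r₂ ≤ y → r₁ = r₂) →
      C x ≤ C y + 1 ∧ C y ≤ C x + 1) :
    ∀ x : ℝ, x ∉ roots →
      (C x ≤ T ∧ T ≤ C z ∨ C z ≤ T ∧ T ≤ C x) →
      ∃ y, y ∉ roots ∧ C y = T := by
  have hzr : z ∉ roots := fun h => lt_irrefl z (hz z h)
  suffices key : ∀ n (x : ℝ), (roots.filter (x < ·)).card = n → x ∉ roots →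
      (C x ≤ T ∧ T ≤ C z ∨ C z ≤ T ∧ T ≤ C x) → ∃ y, y ∉ roots ∧ C y = T by
    intro x hx hT
    exact key _ x rfl hx hT
  intro n
  induction n using Nat.strong_induction_on with
  | _ n ih =>
    intro x hcard hx hT
    by_cases hCx : C x = T
    · exact ⟨x, hx, hCx⟩
    by_cases hS : (roots.filter (x < ·)).Nonempty
    · have hrmem' := (roots.filter (x < ·)).min'_mem hS
      set r := (roots.filter (x < ·)).min' hS with hr
      have hrmem : r ∈ roots := (Finset.mem_filter.1 hrmem').1
      have hxr : x < r := (Finset.mem_filter.1 hrmem').2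
      have hy' : ∃ y' : ℝ, r < y' ∧ ∀ q ∈ roots, q ≤ r ∨ y' < q := by
        by_cases hS'ne : (roots.filter (r < ·)).Nonempty
        · have hmin' := (roots.filter (r < ·)).min'_mem hS'ne
          have h2 : r < (roots.filter (r < ·)).min' hS'ne := (Finset.mem_filter.1 hmin').2
          refine ⟨(r + (roots.filter (r < ·)).min' hS'ne) / 2, by linarith, ?_⟩
          intro q hq
          rcases le_or_gt q r with h | h
          · exact Or.inl h
          · right
            have hle : (roots.filter (r < ·)).min' hS'ne ≤ q :=
              (roots.filter (r < ·)).min'_le q (Finset.mem_filter.2 ⟨hq, h⟩)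
            linarith
        · refine ⟨r + 1, by linarith, ?_⟩
          intro q hq
          rcases le_or_gt q r with h | h
          · exact Or.inl h
          · exact absurd ⟨q, Finset.mem_filter.2 ⟨hq, h⟩⟩ hS'ne
      obtain ⟨y', hry', hsep⟩ := hy'
      have hy'nr : y' ∉ roots := by
        intro hmem
        rcases hsep y' hmem with h | h
        · linarith
        · linarith
      have hpair : ∀ q ∈ roots, x ≤ q → q ≤ y' → q = r := by
        intro q hq hxq hqy
        rcases hsep q hq with h | h
        · have hxq' : x < q := lt_of_le_of_ne hxq (fun h' => hx (h' ▸ hq))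
          have : r ≤ q := (roots.filter (x < ·)).min'_le q (Finset.mem_filter.2 ⟨hq, hxq'⟩)
          linarith
        · linarith
      have hH := H x y' (le_of_lt (lt_trans hxr hry'))
        (fun r₁ h1 r₂ h2 a1 b1 a2 b2 => by
          rw [hpair r₁ h1 a1 b1, hpair r₂ h2 a2 b2])
      have hss : roots.filter (y' < ·) ⊂ roots.filter (x < ·) := by
        constructor
        · intro q hq
          have hq' := Finset.mem_filter.1 hq
          exact Finset.mem_filter.2 ⟨hq'.1, lt_trans (lt_trans hxr hry') hq'.2⟩
        · intro hsub
          have := Finset.mem_filter.1 (hsub hrmem')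
          linarith
      have hlt : (roots.filter (y' < ·)).card < n := hcard ▸ Finset.card_lt_card hss
      exact ih _ hlt y' rfl hy'nr (by omega)
    · have hnone : ∀ q ∈ roots, ¬(x < q) := by
        intro q hq hlt
        exact hS ⟨q, Finset.mem_filter.2 ⟨hq, hlt⟩⟩
      rcases le_total x z with hxz | hzx
      · have hH := H x z hxz (fun r₁ h1 r₂ h2 a1 b1 a2 b2 => by
          exact absurd (lt_of_le_of_ne a1 (fun h' => hx (h' ▸ h1))) (hnone r₁ h1))
        exact ⟨z, hzr, by omega⟩
      · have hH := H z x hzx (fun r₁ h1 r₂ h2 a1 b1 a2 b2 => by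
          exact absurd a1 (not_le.2 (hz r₁ h1)))
        exact ⟨z, hzr, by omega⟩

/-- Any `m ≥ 4` vectors in `ℝ³`, every three of which are linearly independent,
admit a proper linear separation: a linear hyperplane through the origin with
`⌈m/2⌉` of the vectors strictly on one side and `⌊m/2⌋` strictly on the other. -/
theorem proper_linear_separation
    (m : ℕ) (hm : 4 ≤ m) (g : Fin m → Pt3)
    (hgen : ∀ i j k : Fin m, i ≠ j → i ≠ k → j ≠ k →
      LinearIndependent ℝ ![g i, g j, g k]) :
    ∃ v : Pt3,
      (Finset.univ.filter (fun i : Fin m => 0 < ⟪v, g i⟫)).card = (m + 1) / 2 ∧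
      (Finset.univ.filter (fun i : Fin m => ⟪v, g i⟫ < 0)).card = m / 2 ∧
      ∀ i : Fin m, ⟪v, g i⟫ ≠ 0 := by
  have hm0 : 0 < m := by omega
  -- a third index always exists
  have hthird : ∀ i j : Fin m, ∃ k : Fin m, k ≠ i ∧ k ≠ j := by
    intro i j
    have hcard : ({i, j} : Finset (Fin m)).card < (Finset.univ : Finset (Fin m)).card := by
      have h1 : ({i, j} : Finset (Fin m)).card ≤ 2 := by
        apply le_trans (Finset.card_insert_le _ _)
        simp
      have h2 : (Finset.univ : Finset (Fin m)).card = m := by simp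
      omega
    have hns : ¬ (Finset.univ : Finset (Fin m)) ⊆ ({i, j} : Finset (Fin m)) := by
      intro hsub
      exact absurd (Finset.card_le_card hsub) (by omega)
    obtain ⟨k, _, hk⟩ := Finset.not_subset.1 hns
    simp only [Finset.mem_insert, Finset.mem_singleton, not_or] at hk
    exact ⟨k, hk.1, hk.2⟩
  have hpairLI : ∀ i j : Fin m, i ≠ j → LinearIndependent ℝ ![g i, g j] := by
    intro i j hij
    obtain ⟨k, hki, hkj⟩ := hthird i j
    have h3 := hgen i j k hij (Ne.symm hki) (Ne.symm hkj)
    have hcomp : ![g i, g j] = ![g i, g j, g k] ∘ (Fin.castSucc) := by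
      funext l; fin_cases l <;> rfl
    rw [hcomp]
    exact h3.comp _ (Fin.castSucc_injective 2)
  have hg0 : ∀ i, g i ≠ 0 := by
    intro i
    obtain ⟨k, hki, _⟩ := hthird i i
    have h := hpairLI i k (Ne.symm hki)
    simpa using h.ne_zero 0
  -- choose generic b
  obtain ⟨b, hb⟩ := exists_inner_ne_zero Finset.univ g (fun i _ => hg0 i)
  have hβ0 : ∀ i, ⟪b, g i⟫ ≠ 0 := fun i => hb i (Finset.mem_univ i)
  -- choose generic a
  have hwnz : ∀ p ∈ (Finset.univ.offDiag : Finset (Fin m × Fin m)),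
      ⟪b, g p.2⟫ • g p.1 - ⟪b, g p.1⟫ • g p.2 ≠ 0 := by
    intro p hp h0
    have hne : p.1 ≠ p.2 := (Finset.mem_offDiag.1 hp).2.2
    have h1 := (LinearIndependent.pair_iff.1 (hpairLI p.1 p.2 hne)) ⟪b, g p.2⟫ (-⟪b, g p.1⟫)
      (by rw [neg_smul, ← sub_eq_add_neg]; exact h0)
    exact hβ0 p.2 h1.1
  obtain ⟨a, ha⟩ := exists_inner_ne_zero (Finset.univ.offDiag : Finset (Fin m × Fin m))
    (fun p => ⟪b, g p.2⟫ • g p.1 - ⟪b, g p.1⟫ • g p.2) hwnz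
  have hcross : ∀ i j : Fin m, i ≠ j → ⟪a, g i⟫ * ⟪b, g j⟫ ≠ ⟪a, g j⟫ * ⟪b, g i⟫ := by
    intro i j hij hEq
    apply ha (i, j) (Finset.mem_offDiag.2 ⟨Finset.mem_univ _, Finset.mem_univ _, hij⟩)
    show ⟪a, ⟪b, g j⟫ • g i - ⟪b, g i⟫ • g j⟫ = 0
    rw [inner_sub_right, real_inner_smul_right, real_inner_smul_right]
    linarith [hEq]
  set t : Fin m → ℝ := fun i => -⟪a, g i⟫ / ⟪b, g i⟫ with ht
  have htinj : Function.Injective t := by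
    intro i j hEq
    by_contra hij
    apply hcross i j hij
    simp only [ht] at hEq
    have h2 := (div_eq_div_iff (hβ0 i) (hβ0 j)).1 hEq
    linarith
  set f : Fin m → ℝ → ℝ := fun i x => ⟪a, g i⟫ + x * ⟪b, g i⟫ with hf
  have hfactor : ∀ i x, f i x = ⟪b, g i⟫ * (x - t i) := by
    intro i x
    have hB : (⟪b, g i⟫ : ℝ) ≠ 0 := hβ0 i
    show ⟪a, g i⟫ + x * ⟪b, g i⟫ = ⟪b, g i⟫ * (x - -⟪a, g i⟫ / ⟪b, g i⟫)
    generalize hA' : (⟪a, g i⟫ : ℝ) = A at hB ⊢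
    generalize hB' : (⟪b, g i⟫ : ℝ) = B at hB ⊢
    field_simp
    ring
  have hinner : ∀ (i : Fin m) (x : ℝ), ⟪a + x • b, g i⟫ = f i x := by
    intro i x
    rw [inner_add_left, real_inner_smul_left]
  set roots : Finset ℝ := Finset.univ.image t with hroots
  have hrne : roots.Nonempty := ⟨t ⟨0, hm0⟩, Finset.mem_image_of_mem t (Finset.mem_univ _)⟩
  have hmemroots : ∀ x, x ∉ roots → ∀ i, x ≠ t i := by
    intro x hx i hEq
    exact hx (hEq ▸ Finset.mem_image_of_mem t (Finset.mem_univ i))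
  set C : ℝ → ℕ := fun x => (Finset.univ.filter fun i => 0 < f i x).card with hC
  have Hstep : ∀ x y : ℝ, x ≤ y →
      (∀ r₁ ∈ roots, ∀ r₂ ∈ roots, x ≤ r₁ → r₁ ≤ y → x ≤ r₂ → r₂ ≤ y → r₁ = r₂) →
      C x ≤ C y + 1 ∧ C y ≤ C x + 1 := by
    intro x y hxy hone
    obtain ⟨i0, hi0⟩ : ∃ i0 : Fin m, ∀ i, i ≠ i0 → ¬(x ≤ t i ∧ t i ≤ y) := by
      by_cases hex : ∃ i, x ≤ t i ∧ t i ≤ y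
      · obtain ⟨i0, h1, h2⟩ := hex
        refine ⟨i0, fun i hi hmem => hi (htinj ?_)⟩
        exact hone (t i) (Finset.mem_image_of_mem t (Finset.mem_univ i))
          (t i0) (Finset.mem_image_of_mem t (Finset.mem_univ i0)) hmem.1 hmem.2 h1 h2
      · exact ⟨⟨0, hm0⟩, fun i _ hmem => hex ⟨i, hmem⟩⟩
    have hsgn : ∀ i, i ≠ i0 → (0 < f i x ↔ 0 < f i y) := by
      intro i hi
      have hni := hi0 i hi
      rw [hfactor, hfactor]
      apply pos_mul_iff_aux
      rcases lt_or_ge (t i) x with h | h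
      · have h1 : 0 < x - t i := by linarith
        have h2 : 0 < y - t i := by linarith
        exact mul_pos h1 h2
      · have h2 : y < t i := by
          by_contra h3
          exact hni ⟨h, not_lt.1 h3⟩
        have h1 : x - t i < 0 := by linarith
        have h2' : y - t i < 0 := by linarith
        exact mul_pos_of_neg_of_neg h1 h2'
    have herase : (Finset.univ.filter fun i => 0 < f i x).erase i0
        = (Finset.univ.filter fun i => 0 < f i y).erase i0 := by
      ext i
      simp only [Finset.mem_erase, Finset.mem_filter, Finset.mem_univ, true_and]
      constructor
      · rintro ⟨hne, hp⟩; exact ⟨hne, (hsgn i hne).1 hp⟩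
      · rintro ⟨hne, hp⟩; exact ⟨hne, (hsgn i hne).2 hp⟩
    constructor
    · calc C x ≤ ((Finset.univ.filter fun i => 0 < f i x).erase i0).card + 1 :=
            card_le_erase_add_one _ _
        _ = ((Finset.univ.filter fun i => 0 < f i y).erase i0).card + 1 := by rw [herase]
        _ ≤ C y + 1 := by
            simp only [hC]
            exact Nat.add_le_add_right Finset.card_erase_le 1
    · calc C y ≤ ((Finset.univ.filter fun i => 0 < f i y).erase i0).card + 1 :=
            card_le_erase_add_one _ _
        _ = ((Finset.univ.filter fun i => 0 < f i x).erase i0).card + 1 := by rw [herase]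
        _ ≤ C x + 1 := by
            simp only [hC]
            exact Nat.add_le_add_right Finset.card_erase_le 1
  set z : ℝ := roots.max' hrne + 1 with hzdef
  set x₀ : ℝ := roots.min' hrne - 1 with hx₀def
  have htz : ∀ i, t i < z := by
    intro i
    have := roots.le_max' (t i) (Finset.mem_image_of_mem t (Finset.mem_univ i))
    simp only [hzdef]; linarith
  have htx₀ : ∀ i, x₀ < t i := by
    intro i
    have := roots.min'_le (t i) (Finset.mem_image_of_mem t (Finset.mem_univ i))
    simp only [hx₀def]; linarith
  have hzpos : ∀ i, (0 < f i z ↔ 0 < ⟪b, g i⟫) := by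
    intro i
    rw [hfactor]
    have h1 : 0 < z - t i := by have := htz i; linarith
    constructor
    · intro h
      by_contra hneg
      push_neg at hneg
      nlinarith
    · intro h
      exact mul_pos h h1
  have hx₀pos : ∀ i, (0 < f i x₀ ↔ ¬ 0 < f i z) := by
    intro i
    rw [hfactor i x₀, hzpos i]
    have h1 : x₀ - t i < 0 := by have := htx₀ i; linarith
    constructor
    · intro h hbpos
      nlinarith
    · intro h
      have hβneg : ⟪b, g i⟫ < 0 := lt_of_le_of_ne (not_lt.1 h) (hβ0 i)
      exact mul_pos_of_neg_of_neg hβneg h1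
  have hsum : C x₀ + C z = m := by
    have h := Finset.card_filter_add_card_filter_not
      (s := (Finset.univ : Finset (Fin m))) (p := fun i => 0 < f i z)
    have hfe : (Finset.univ.filter fun i : Fin m => ¬ 0 < f i z)
        = Finset.univ.filter fun i => 0 < f i x₀ := by
      apply Finset.filter_congr
      intro i _
      exact (hx₀pos i).symm
    rw [hfe] at h
    simp only [Finset.card_univ, Fintype.card_fin] at h
    simp only [hC]
    omega
  have hx₀r : x₀ ∉ roots := by
    intro h
    obtain ⟨i, _, hEq⟩ := Finset.mem_image.1 h
    have := htx₀ i
    linarith [hEq.le]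
  have hzroots : ∀ r ∈ roots, r < z := by
    intro r hr
    obtain ⟨i, _, rfl⟩ := Finset.mem_image.1 hr
    exact htz i
  have hT0 : (C x₀ ≤ (m + 1) / 2 ∧ (m + 1) / 2 ≤ C z) ∨
      (C z ≤ (m + 1) / 2 ∧ (m + 1) / 2 ≤ C x₀) := by omega
  obtain ⟨y, hy, hCy⟩ := discrete_ivt roots C z hzroots ((m + 1) / 2) Hstep x₀ hx₀r hT0
  have hne : ∀ i, f i y ≠ 0 := by
    intro i
    rw [hfactor]
    refine mul_ne_zero (hβ0 i) ?_
    have h := hmemroots y hy i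
    intro h0
    apply h
    linarith
  have hfilter : (Finset.univ.filter fun i : Fin m => 0 < ⟪a + y • b, g i⟫)
      = Finset.univ.filter fun i => 0 < f i y := by
    apply Finset.filter_congr
    intro i _
    rw [hinner]
  refine ⟨a + y • b, ?_, ?_, ?_⟩
  · rw [hfilter]
    exact hCy
  · have h := Finset.card_filter_add_card_filter_not
      (s := (Finset.univ : Finset (Fin m))) (p := fun i => 0 < ⟪a + y • b, g i⟫)
    have hfe : (Finset.univ.filter fun i : Fin m => ¬ 0 < ⟪a + y • b, g i⟫)
        = Finset.univ.filter fun i => ⟪a + y • b, g i⟫ < 0 := by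
      apply Finset.filter_congr
      intro i _
      rw [hinner]
      have := hne i
      constructor
      · intro h'
        exact lt_of_le_of_ne (not_lt.1 h') this
      · intro h'
        exact not_lt.2 (le_of_lt h')
    rw [hfe, hfilter] at h
    simp only [Finset.card_univ, Fintype.card_fin] at h
    have h2 : (Finset.filter (fun i => 0 < f i y) Finset.univ).card = (m + 1) / 2 := hCy
    omega
  · intro i
    rw [hinner]
    exact hne i
end
end

section
/- For every fixed integer t' ≥ 0 there exist a constant c > 0 and a natural number d₀ (depending only on t') such that for every integer d ≥ d₀ the following holds: for every set Q of d+5 points in general position in ℝ^d that is in convex position and forms the vertex set of a d-dimensional convex polytope conv(Q) which is (⌊d/2⌋ − t')-neighborly, there exist at least c · d³ distinct unordered partitions of Q into two disjoint sets B and C with B ∪ C = Q and min{|B|, |C|} ≥ ⌊d/2⌋ − t' + 1, such that the relative interiors of the convex hulls of B and of C have a common point. -/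
noncomputable section

attribute [local instance] Classical.propDecidable

/-- A finite point set is in convex position if no point of it lies in the convex
hull of the remaining points. -/
def ConvexPos (d : ℕ) (V : Finset (Pt d)) : Prop :=
  ∀ v ∈ V, v ∉ convexHull ℝ ((V : Set (Pt d)) \ {v})

/-- `S` is a face of the polytope `conv V`: some linear functional attains the
value `a` on all of `S` and values `< a` on the rest of `V`. -/
def IsFaceOf (d : ℕ) (S V : Finset (Pt d)) : Prop :=
  S ⊆ V ∧ ∃ (f : Pt d →ₗ[ℝ] ℝ) (a : ℝ),
    (∀ x ∈ S, f x = a) ∧ ∀ y ∈ V, y ∉ S → f y < a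

/-- The polytope `conv V` is `t`-neighborly: every subset of `V` with at most `t`
elements is a face of `conv V`. -/
def Neighborly (d t : ℕ) (V : Finset (Pt d)) : Prop :=
  ∀ S : Finset (Pt d), S ⊆ V → S.card ≤ t → IsFaceOf d S V

/-- The unordered partitions of `P` into two disjoint parts `B`, `C`, each of
size at least `k`, whose simplices cross (the relative interiors of their convex
hulls meet). -/
def crossingPartitions (d : ℕ) (P : Finset (Pt d)) (k : ℕ) : Set (Sym2 (Finset (Pt d))) :=
  {p | ∃ B C : Finset (Pt d), p = s(B, C) ∧ B ∪ C = P ∧ Disjoint B C ∧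
        k ≤ B.card ∧ k ≤ C.card ∧
        (intrinsicInterior ℝ (convexHull ℝ (B : Set (Pt d))) ∩
          intrinsicInterior ℝ (convexHull ℝ (C : Set (Pt d)))).Nonempty}



set_option maxHeartbeats 1000000
set_option synthInstance.maxHeartbeats 400000

open Finset Set

section IntrinsicLemma

variable {E : Type*} [NormedAddCommGroup E] [NormedSpace ℝ E]
/-- A strictly positive convex combination lies in the intrinsic interior of the
convex hull of the range of the points. -/
lemma pos_combo_mem_intrinsicInterior {ι : Type*} [Fintype ι] [Nonempty ι]
    (p : ι → E) (w : ι → ℝ) (hw : ∀ i, 0 < w i) (h1 : ∑ i, w i = 1) :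
    (∑ i, w i • p i) ∈ intrinsicInterior ℝ (convexHull ℝ (Set.range p)) := by
  classical
  set s : Set E := Set.range p with hs
  set x : E := ∑ i, w i • p i with hx
  have hxs : x ∈ convexHull ℝ s := by
    have := Finset.centerMass_mem_convexHull (Finset.univ : Finset ι)
      (w := w) (z := p) (fun i _ => (hw i).le) (by rw [h1]; norm_num)
      (fun i _ => Set.mem_range_self i)
    rwa [Finset.centerMass_eq_of_sum_1 _ _ h1] at this
  have hxA : x ∈ affineSpan ℝ (convexHull ℝ s) := subset_affineSpan ℝ _ hxs
  obtain ⟨i₀⟩ := ‹Nonempty ι›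
  -- the linear map sending coefficients to combinations of differences
  let L : (ι → ℝ) →ₗ[ℝ] E :=
  { toFun := fun u => ∑ i, u i • (p i - p i₀)
    map_add' := by intro u v; simp [add_smul, Finset.sum_add_distrib]
    map_smul' := by intro c u; simp [smul_smul, Finset.smul_sum] }
  have hLapp : ∀ u, L u = ∑ i, u i • (p i - p i₀) := fun u => rfl
  have hLrange : ∀ v ∈ vectorSpan ℝ s, v ∈ LinearMap.range L := by
    intro v hv
    rw [hs, vectorSpan_range_eq_span_range_vsub_right ℝ p i₀] at hv
    refine Submodule.span_le.2 ?_ hv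
    rintro _ ⟨i, rfl⟩
    refine ⟨Pi.single i 1, ?_⟩
    rw [hLapp]
    rw [Finset.sum_eq_single i]
    · simp
    · intro j _ hj; simp [Pi.single_apply, hj]
    · simp
  obtain ⟨g, hg⟩ := LinearMap.exists_rightInverse_of_surjective
    (f := L.rangeRestrict) (LinearMap.range_rangeRestrict L ▸ rfl)
  have hgL : ∀ v : LinearMap.range L, L (g v) = (v : E) := by
    intro v
    have := congrArg (fun h => (h v : E)) hg
    simpa using congrArg Subtype.val (LinearMap.congr_fun hg v)
  -- coordinate functionals
  let σ : (ι → ℝ) →ₗ[ℝ] ℝ := ∑ j, LinearMap.proj j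
  have hσ : ∀ u : ι → ℝ, σ u = ∑ j, u j := by intro u; simp [σ]
  let ψ : ι → (LinearMap.range L →ₗ[ℝ] ℝ) := fun i =>
    ((LinearMap.proj i : (ι → ℝ) →ₗ[ℝ] ℝ) - (if i = i₀ then σ else 0)).comp g
  let Ψ : ι → (LinearMap.range L →L[ℝ] ℝ) := fun i => (ψ i).toContinuousLinearMap
  set ε : ℝ := Finset.univ.inf' (⟨i₀, Finset.mem_univ _⟩ : (Finset.univ : Finset ι).Nonempty) (fun i => w i / (‖Ψ i‖ + 1))
    with hε
  have hεpos : 0 < ε := by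
    rw [hε]; refine (Finset.lt_inf'_iff _).2 ?_
    intro i _
    exact div_pos (hw i)
      (add_pos_of_nonneg_of_pos (ContinuousLinearMap.opNorm_nonneg _) one_pos)
  have hεle : ∀ i, ε ≤ w i / (‖Ψ i‖ + 1) := fun i =>
    Finset.inf'_le _ (Finset.mem_univ i)
  rw [mem_intrinsicInterior]
  refine ⟨⟨x, hxA⟩, ?_, rfl⟩
  rw [mem_interior_iff_mem_nhds, Metric.mem_nhds_iff]
  refine ⟨ε, hεpos, ?_⟩
  rintro y hy
  have hvE : (y : E) - x ∈ vectorSpan ℝ s := by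
    have h3 := AffineSubspace.vsub_mem_direction
      (y.2 : (y:E) ∈ affineSpan ℝ (convexHull ℝ s)) hxA
    have hdir : (affineSpan ℝ (convexHull ℝ s)).direction = vectorSpan ℝ s := by
      rw [affineSpan_convexHull, direction_affineSpan]
    rw [hdir] at h3
    simpa [vsub_eq_sub] using h3
  set vv : LinearMap.range L := ⟨(y : E) - x, hLrange _ hvE⟩ with hvv
  have hvnorm : ‖vv‖ < ε := by
    have h1 : dist y (⟨x, hxA⟩ : (affineSpan ℝ (convexHull ℝ s) : Set E)) < ε :=
      Metric.mem_ball.1 hy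
    rw [Subtype.dist_eq, dist_eq_norm] at h1
    exact h1
  set u : ι → ℝ := g vv with hu
  set w' : ι → ℝ := fun i => w i + (u i - if i = i₀ then (∑ j, u j) else 0) with hw'
  have hψval : ∀ i, ψ i vv = u i - if i = i₀ then (∑ j, u j) else 0 := by
    intro i
    by_cases hi : i = i₀ <;> simp [ψ, hi, hσ, hu]
  have hsmall : ∀ i, |u i - if i = i₀ then (∑ j, u j) else 0| < w i := by
    intro i
    rw [← hψval]
    calc |ψ i vv| = ‖Ψ i vv‖ := by rw [Real.norm_eq_abs]; rfl
    _ ≤ ‖Ψ i‖ * ‖vv‖ := (Ψ i).le_opNorm vv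
    _ ≤ ‖Ψ i‖ * ε := by
        exact mul_le_mul_of_nonneg_left hvnorm.le (ContinuousLinearMap.opNorm_nonneg _)
    _ < (‖Ψ i‖ + 1) * ε := by
        exact mul_lt_mul_of_pos_right (lt_add_one _) hεpos
    _ ≤ (‖Ψ i‖ + 1) * (w i / (‖Ψ i‖ + 1)) := by
        exact mul_le_mul_of_nonneg_left (hεle i)
          (le_of_lt (add_pos_of_nonneg_of_pos (ContinuousLinearMap.opNorm_nonneg _) one_pos))
    _ = w i := by
        have hne : ‖Ψ i‖ + 1 ≠ 0 := by
          have := ContinuousLinearMap.opNorm_nonneg (Ψ i); intro h; nlinarith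
        field_simp
  have hw'pos : ∀ i, 0 < w' i := by
    intro i
    have := hsmall i
    rw [abs_lt] at this
    simp only [hw']
    nlinarith [this.1]
  have hw'sum : ∑ i, w' i = 1 := by
    simp only [hw']
    rw [Finset.sum_add_distrib, Finset.sum_sub_distrib, h1]
    simp [Finset.sum_ite_eq']
  have hcombo : ∑ i, w' i • p i = (y : E) := by
    have hLu : L u = (y : E) - x := hgL vv
    rw [hLapp] at hLu
    have expand : ∑ i, w' i • p i
        = (∑ i, w i • p i) + ((∑ i, u i • p i) - (∑ j, u j) • p i₀) := by
      simp only [hw', add_smul, sub_smul, Finset.sum_add_distrib, Finset.sum_sub_distrib]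
      congr 1
      congr 1
      simp [ite_smul]
    have expand2 : (∑ i, u i • p i) - (∑ j, u j) • p i₀ = (y : E) - x := by
      rw [← hLu]
      simp [smul_sub, Finset.sum_sub_distrib, ← Finset.sum_smul]
    rw [expand, expand2, ← hx]
    abel
  show (y : E) ∈ convexHull ℝ s
  have := Finset.centerMass_mem_convexHull (Finset.univ : Finset ι)
    (w := w') (z := p) (fun i _ => (hw'pos i).le) (by rw [hw'sum]; norm_num)
    (fun i _ => Set.mem_range_self i)
  rwa [Finset.centerMass_eq_of_sum_1 _ _ hw'sum, hcombo] at this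


end IntrinsicLemma


namespace Crossing

variable {d : ℕ} {Q : Finset (Pt d)}

/-- The linear map recording the total weight and weighted sum of a coefficient vector. -/
def Tlin (d : ℕ) (Q : Finset (Pt d)) : ({x // x ∈ Q} → ℝ) →ₗ[ℝ] (Pt d × ℝ) where
  toFun g := (∑ i, g i • (i : Pt d), ∑ i, g i)
  map_add' u v := by
    simp [add_smul, Finset.sum_add_distrib, Prod.ext_iff]
  map_smul' c u := by
    simp [smul_smul, Finset.smul_sum, Finset.mul_sum, Prod.ext_iff]

/-- The space of affine dependences among the points of `Q`. -/
def Dep (d : ℕ) (Q : Finset (Pt d)) : Submodule ℝ ({x // x ∈ Q} → ℝ) :=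
  LinearMap.ker (Tlin d Q)

lemma dep_sum {g : {x // x ∈ Q} → ℝ} (hg : g ∈ Dep d Q) : ∑ i, g i = 0 := by
  have := (LinearMap.mem_ker.1 hg)
  exact congrArg Prod.snd this

lemma dep_combo {g : {x // x ∈ Q} → ℝ} (hg : g ∈ Dep d Q) :
    ∑ i, g i • (i : Pt d) = 0 := by
  have := (LinearMap.mem_ker.1 hg)
  exact congrArg Prod.fst this

/-- A dependence supported on at most `d+1` points is zero. -/
lemma dep_eq_zero_of_small_support (hgen : GenPos d Q)
    {g : {x // x ∈ Q} → ℝ} (hg : g ∈ Dep d Q)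
    (hsupp : (Finset.univ.filter (fun i => g i ≠ 0)).card ≤ d + 1) : g = 0 := by
  classical
  set supp := Finset.univ.filter (fun i => g i ≠ 0) with hsuppdef
  set S : Finset (Pt d) := supp.image Subtype.val with hS
  have hSsub : S ⊆ Q := by
    intro a ha
    rw [hS, Finset.mem_image] at ha
    obtain ⟨i, _, rfl⟩ := ha
    exact i.2
  have hScard : S.card ≤ d + 1 := le_trans (Finset.card_image_le) hsupp
  have hindep := hgen S hSsub hScard
  -- affine independence of the family indexed by the support
  have hmapmem : ∀ i : {x // x ∈ supp}, ((i : {x // x ∈ Q}) : Pt d) ∈ (S : Set (Pt d)) := by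
    intro i
    exact Finset.mem_coe.2 (Finset.mem_image.2 ⟨(i : {x // x ∈ Q}), i.2, rfl⟩)
  set e : {x // x ∈ supp} → {x // x ∈ (S : Set (Pt d))} :=
    fun i => ⟨((i : {x // x ∈ Q}) : Pt d), hmapmem i⟩ with he
  have heinj : Function.Injective e := by
    intro a b hab
    have h2 := congrArg (fun z : {x // x ∈ (S : Set (Pt d))} => (z : Pt d)) hab
    exact Subtype.ext (Subtype.ext h2)
  have hindep2 : AffineIndependent ℝ (fun i : {x // x ∈ supp} => ((i : {x // x ∈ Q}) : Pt d)) := by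
    have := hindep.comp_embedding ⟨e, heinj⟩
    exact this
  -- apply the linear-combination characterization
  rw [affineIndependent_iff] at hindep2
  have hzero := hindep2 Finset.univ (fun i => g i) ?_ ?_
  · -- conclude g = 0
    funext i
    by_cases hi : g i = 0
    · simp [hi]
    · have : i ∈ supp := by rw [hsuppdef]; simp [hi]
      simpa using hzero ⟨i, this⟩ (Finset.mem_univ _)
  · -- sum of weights is zero
    have h1 : ∑ i : {x // x ∈ supp}, g i = ∑ i ∈ supp, g i := by
      rw [Finset.univ_eq_attach, Finset.sum_attach supp (fun i => g i)]
    have h2 : ∑ i ∈ supp, g i = ∑ i, g i := by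
      refine Finset.sum_subset (Finset.subset_univ _) ?_
      intro i _ hi
      rw [hsuppdef] at hi
      simp only [Finset.mem_filter, Finset.mem_univ, true_and, not_not] at hi
      exact hi
    rw [h1, h2, dep_sum hg]
  · -- weighted sum of points is zero
    have h1 : ∑ i : {x // x ∈ supp}, g i • ((i : {x // x ∈ Q}) : Pt d)
        = ∑ i ∈ supp, g i • (i : Pt d) := by
      rw [Finset.univ_eq_attach, Finset.sum_attach supp (fun i => g i • (i : Pt d))]
    have h2 : ∑ i ∈ supp, g i • (i : Pt d) = ∑ i, g i • (i : Pt d) := by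
      refine Finset.sum_subset (Finset.subset_univ _) ?_
      intro i _ hi
      rw [hsuppdef] at hi
      simp only [Finset.mem_filter, Finset.mem_univ, true_and, not_not] at hi
      simp [hi]
    rw [h1, h2, dep_combo hg]


lemma dep_eq_zero_of_many_zeros (hcard : Q.card = d + 5) (hgen : GenPos d Q)
    {g : {x // x ∈ Q} → ℝ} (hg : g ∈ Dep d Q) (Z : Finset {x // x ∈ Q})
    (hZ : 4 ≤ Z.card) (hz : ∀ i ∈ Z, g i = 0) : g = 0 := by
  classical
  refine dep_eq_zero_of_small_support hgen hg ?_
  have hsub : Finset.univ.filter (fun i => g i ≠ 0) ⊆ Finset.univ \ Z := by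
    intro i hi
    simp only [Finset.mem_filter, Finset.mem_univ, true_and] at hi
    simp only [Finset.mem_sdiff, Finset.mem_univ, true_and]
    intro hiZ
    exact hi (hz i hiZ)
  have hcardZ : (Finset.univ \ Z).card = Fintype.card {x // x ∈ Q} - Z.card := by
    rw [Finset.card_sdiff_of_subset (Finset.subset_univ _), Finset.card_univ]
  have hcardQ : Fintype.card {x // x ∈ Q} = d + 5 := by
    rw [Fintype.card_coe, hcard]
  calc (Finset.univ.filter (fun i => g i ≠ 0)).card ≤ (Finset.univ \ Z).card :=
        Finset.card_le_card hsub
    _ = (d + 5) - Z.card := by rw [hcardZ, hcardQ]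
    _ ≤ (d + 5) - 4 := Nat.sub_le_sub_left hZ _
    _ = d + 1 := by omega

lemma finrank_Dep_ge (hcard : Q.card = d + 5) :
    4 ≤ Module.finrank ℝ (Dep d Q) := by
  have hdom : Module.finrank ℝ ({x // x ∈ Q} → ℝ) = d + 5 := by
    rw [Module.finrank_pi, Fintype.card_coe, hcard]
  have hcodom : Module.finrank ℝ (Pt d × ℝ) = d + 1 := by
    rw [Module.finrank_prod, finrank_euclideanSpace_fin, Module.finrank_self]
  have hrn := LinearMap.finrank_range_add_finrank_ker (Tlin d Q)
  have hrange : Module.finrank ℝ (LinearMap.range (Tlin d Q)) ≤ d + 1 :=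
    hcodom ▸ Submodule.finrank_le _
  rw [hdom] at hrn
  have : Module.finrank ℝ (LinearMap.ker (Tlin d Q)) ≥ 4 := by omega
  exact this

/-- Restriction of a dependence to the coordinates in `T`. -/
def piT (d : ℕ) (Q : Finset (Pt d)) (T : Finset {x // x ∈ Q}) :
    (Dep d Q) →ₗ[ℝ] ({x // x ∈ T} → ℝ) :=
  LinearMap.pi (fun j => (LinearMap.proj (j : {x // x ∈ Q})).comp (Dep d Q).subtype)

lemma piT_apply (T : Finset {x // x ∈ Q}) (v : Dep d Q) (j : {x // x ∈ T}) :
    piT d Q T v j = (v : {x // x ∈ Q} → ℝ) (j : {x // x ∈ Q}) := rfl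

lemma exists_vanishing (hcard : Q.card = d + 5) (T : Finset {x // x ∈ Q})
    (hT : T.card = 3) :
    ∃ g : {x // x ∈ Q} → ℝ, g ∈ Dep d Q ∧ g ≠ 0 ∧ ∀ i ∈ T, g i = 0 := by
  classical
  have hker : LinearMap.ker (piT d Q T) ≠ ⊥ := by
    intro hbot
    have hinj : Function.Injective (piT d Q T) := LinearMap.ker_eq_bot.1 hbot
    have hle := LinearMap.finrank_le_finrank_of_injective hinj
    rw [Module.finrank_pi, Fintype.card_coe, hT] at hle
    have := finrank_Dep_ge (Q := Q) hcard
    omega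
  obtain ⟨v, hv, hvne⟩ := Submodule.exists_mem_ne_zero_of_ne_bot hker
  refine ⟨(v : {x // x ∈ Q} → ℝ), v.2, ?_, ?_⟩
  · intro h
    exact hvne (Subtype.ext h)
  · intro i hi
    have := congrFun (LinearMap.mem_ker.1 hv) ⟨i, hi⟩
    exact this

lemma dep_multiple (hcard : Q.card = d + 5) (hgen : GenPos d Q)
    {g h : {x // x ∈ Q} → ℝ} (hg : g ∈ Dep d Q) (hh : h ∈ Dep d Q)
    {T : Finset {x // x ∈ Q}} (hT : T.card = 3)
    (hgT : ∀ i ∈ T, g i = 0) (hhT : ∀ i ∈ T, h i = 0) (hgne : g ≠ 0) :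
    ∃ c : ℝ, h = c • g := by
  classical
  obtain ⟨i₀, hi₀⟩ : ∃ i, g i ≠ 0 := by
    by_contra hcon
    push_neg at hcon
    exact hgne (funext hcon)
  have hi₀T : i₀ ∉ T := fun hmem => hi₀ (hgT i₀ hmem)
  set u : {x // x ∈ Q} → ℝ := g i₀ • h - h i₀ • g with hu
  have humem : u ∈ Dep d Q :=
    Submodule.sub_mem _ (Submodule.smul_mem _ _ hh) (Submodule.smul_mem _ _ hg)
  have huzero : u = 0 := by
    refine dep_eq_zero_of_many_zeros hcard hgen humem (insert i₀ T) ?_ ?_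
    · rw [Finset.card_insert_of_notMem hi₀T, hT]
    · intro i hi
      rcases Finset.mem_insert.1 hi with rfl | hiT
      · simp [hu]; ring
      · simp [hu, hgT i hiT, hhT i hiT]
  refine ⟨h i₀ / g i₀, ?_⟩
  funext j
  have := congrFun huzero j
  simp only [hu, Pi.sub_apply, Pi.smul_apply, smul_eq_mul, Pi.zero_apply] at this
  have h2 : g i₀ * h j = h i₀ * g j := by linarith
  simp only [Pi.smul_apply, smul_eq_mul]
  field_simp
  linarith [h2]

lemma dep_surj (hcard : Q.card = d + 5) (hgen : GenPos d Q)
    {T : Finset {x // x ∈ Q}} (hT : T.card = 3) (a : {x // x ∈ Q} → ℝ) :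
    ∃ g, g ∈ Dep d Q ∧ ∀ i ∈ T, g i = a i := by
  classical
  obtain ⟨g₀, hg₀mem, hg₀ne, hg₀T⟩ := exists_vanishing hcard T hT
  set v₀ : Dep d Q := ⟨g₀, hg₀mem⟩ with hv₀
  have hv₀ne : v₀ ≠ 0 := fun h => hg₀ne (congrArg Subtype.val h)
  have hkerle : LinearMap.ker (piT d Q T) ≤ Submodule.span ℝ {v₀} := by
    intro v hv
    have hvT : ∀ i ∈ T, (v : {x // x ∈ Q} → ℝ) i = 0 := by
      intro i hi
      exact congrFun (LinearMap.mem_ker.1 hv) ⟨i, hi⟩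
    obtain ⟨c, hc⟩ := dep_multiple hcard hgen hg₀mem v.2 hT hg₀T hvT hg₀ne
    have : v = c • v₀ := by
      apply Subtype.ext
      simpa using hc
    rw [this]
    exact Submodule.smul_mem _ _ (Submodule.mem_span_singleton_self _)
  have hkerfr : Module.finrank ℝ (LinearMap.ker (piT d Q T)) ≤ 1 := by
    have h1 := Submodule.finrank_mono hkerle
    have h2 : Module.finrank ℝ (Submodule.span ℝ {v₀}) = 1 :=
      finrank_span_singleton hv₀ne
    omega
  have hrn := LinearMap.finrank_range_add_finrank_ker (piT d Q T)
  have hDfr := finrank_Dep_ge (Q := Q) hcard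
  have hcod : Module.finrank ℝ ({x // x ∈ T} → ℝ) = 3 := by
    rw [Module.finrank_pi, Fintype.card_coe, hT]
  have hrange_le : Module.finrank ℝ (LinearMap.range (piT d Q T)) ≤ 3 :=
    hcod ▸ Submodule.finrank_le _
  have hrange_eq : LinearMap.range (piT d Q T) = ⊤ := by
    apply Submodule.eq_top_of_finrank_eq
    rw [hcod]
    omega
  have hsurj : Function.Surjective (piT d Q T) := LinearMap.range_eq_top.1 hrange_eq
  obtain ⟨v, hv⟩ := hsurj (fun j => a (j : {x // x ∈ Q}))
  refine ⟨(v : {x // x ∈ Q} → ℝ), v.2, ?_⟩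
  intro i hi
  exact congrFun hv ⟨i, hi⟩


/-- A finite set of nonzero vectors admits a linear functional nonvanishing on all of them. -/
lemma exists_dual_ne_zero {M : Type*} [AddCommGroup M] [Module ℝ M]
    (s : Finset M) (hs : ∀ v ∈ s, v ≠ 0) :
    ∃ φ : Module.Dual ℝ M, ∀ v ∈ s, φ v ≠ 0 := by
  classical
  set W : M → Subspace ℝ (Module.Dual ℝ M) :=
    fun v => LinearMap.ker ((Module.Dual.eval ℝ M) v) with hW
  have htop : ⊤ ∉ s.image W := by
    intro hmem
    rw [Finset.mem_image] at hmem
    obtain ⟨v, hv, hWv⟩ := hmem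
    have : v = 0 := by
      rw [← Module.forall_dual_apply_eq_zero_iff (R := ℝ)]
      intro φ
      have : φ ∈ W v := hWv ▸ Submodule.mem_top
      simpa [hW] using this
    exact hs v hv this
  have hne := Subspace.biUnion_ne_univ_of_top_notMem htop
  obtain ⟨φ, hφ⟩ := Set.ne_univ_iff_exists_notMem _ |>.1 hne
  refine ⟨φ, fun v hv hzero => hφ ?_⟩
  refine Set.mem_biUnion (Finset.mem_image_of_mem W hv) ?_
  simpa [hW] using hzero

variable {d : ℕ} {Q : Finset (Pt d)}

lemma pos_nonempty {g : {x // x ∈ Q} → ℝ} (hg : g ∈ Dep d Q) (hgne : g ≠ 0) :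
    (Finset.univ.filter (fun i => 0 < g i)).Nonempty := by
  by_contra hcon
  rw [Finset.not_nonempty_iff_eq_empty, Finset.filter_eq_empty_iff] at hcon
  have hnonneg : ∀ i ∈ Finset.univ, 0 ≤ -g i := by
    intro i _
    have := hcon (Finset.mem_univ i)
    push_neg at this
    linarith
  have hsum : ∑ i, -g i = 0 := by
    rw [Finset.sum_neg_distrib, dep_sum hg, neg_zero]
  have := (Finset.sum_eq_zero_iff_of_nonneg hnonneg).1 hsum
  apply hgne
  funext i
  have := this i (Finset.mem_univ i)
  simpa using by linarith [this]

lemma neg_nonempty {g : {x // x ∈ Q} → ℝ} (hg : g ∈ Dep d Q) (hgne : g ≠ 0) :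
    (Finset.univ.filter (fun i => g i < 0)).Nonempty := by
  have hneg : (-g) ∈ Dep d Q := Submodule.neg_mem _ hg
  have hnegne : (-g) ≠ 0 := by
    intro h
    apply hgne
    have := congrArg Neg.neg h
    simpa using this
  have := pos_nonempty hneg hnegne
  convert this using 2
  rename_i i
  simp
lemma filter_neg_eq (g : {x // x ∈ Q} → ℝ) :
    Finset.univ.filter (fun i => g i < 0)
      = Finset.univ.filter (fun i => 0 < (-g) i) := by
  ext i; simp

/-- The positive part of a nonzero dependence has more than `m` elements when
the polytope is `m`-neighborly. -/
lemma pos_card_ge {m : ℕ} (hneigh : Neighborly d m Q)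
    {g : {x // x ∈ Q} → ℝ} (hg : g ∈ Dep d Q) (hgne : g ≠ 0) :
    m + 1 ≤ (Finset.univ.filter (fun i => 0 < g i)).card := by
  classical
  set P := Finset.univ.filter (fun i => 0 < g i) with hP
  set N := Finset.univ.filter (fun i => g i < 0) with hN
  by_contra hcon
  push_neg at hcon
  have hPm : P.card ≤ m := by omega
  set S : Finset (Pt d) := P.image Subtype.val with hS
  have hSsub : S ⊆ Q := by
    intro a ha
    rw [hS, Finset.mem_image] at ha
    obtain ⟨i, _, rfl⟩ := ha
    exact i.2
  have hScard : S.card ≤ m := le_trans Finset.card_image_le hPm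
  obtain ⟨-, f, a, hfa, hflt⟩ := hneigh S hSsub hScard
  have h0 : ∑ i, g i * f (i : Pt d) = 0 := by
    have := congrArg f (dep_combo hg)
    rw [map_sum, map_zero] at this
    simpa [smul_eq_mul] using this
  have hsplit : ∑ i, g i * f (i : Pt d)
      = ∑ i ∈ P, g i * f (i : Pt d) + ∑ i ∈ Finset.univ \ P, g i * f (i : Pt d) := by
    rw [← Finset.sum_sdiff (Finset.subset_univ P)]; ring
  have hPa : ∑ i ∈ P, g i * f (i : Pt d) = ∑ i ∈ P, g i * a := by
    refine Finset.sum_congr rfl fun i hi => ?_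
    have : (i : Pt d) ∈ S := Finset.mem_image_of_mem _ hi
    rw [hfa _ this]
  have hNlt : ∑ i ∈ Finset.univ \ P, g i * a < ∑ i ∈ Finset.univ \ P, g i * f (i : Pt d) := by
    obtain ⟨i₀, hi₀'⟩ := neg_nonempty hg hgne
    have hi₀ : i₀ ∈ Finset.univ ∧ g i₀ < 0 := by
      simpa using Finset.mem_filter.1 hi₀'
    refine Finset.sum_lt_sum (fun i hi => ?_) ⟨i₀, ?_, ?_⟩
    · rw [Finset.mem_sdiff, hP, Finset.mem_filter] at hi
      have hle : g i ≤ 0 := by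
        have h2 := hi.2
        push_neg at h2
        exact h2 (Finset.mem_univ i)
      rcases lt_or_eq_of_le hle with hlt | heq
      · have hiS : (i : Pt d) ∉ S := by
          intro hmem
          rw [hS, Finset.mem_image] at hmem
          obtain ⟨j, hj, hji⟩ := hmem
          have : j = i := Subtype.ext hji
          subst this
          rw [hP, Finset.mem_filter] at hj
          linarith [hj.2]
        have := hflt _ i.2 hiS
        nlinarith
      · rw [heq]; simp
    · rw [Finset.mem_sdiff]
      refine ⟨Finset.mem_univ _, ?_⟩
      rw [hP, Finset.mem_filter]
      push_neg
      intro
      linarith [hi₀.2]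
    · have hiS : (i₀ : Pt d) ∉ S := by
        intro hmem
        rw [hS, Finset.mem_image] at hmem
        obtain ⟨j, hj, hji⟩ := hmem
        have : j = i₀ := Subtype.ext hji
        subst this
        rw [hP, Finset.mem_filter] at hj
        linarith [hj.2]
      have := hflt _ i₀.2 hiS
      nlinarith [hi₀.2]
  have hsum_ga : ∑ i ∈ P, g i * a + ∑ i ∈ Finset.univ \ P, g i * a = 0 := by
    have h1 : ∑ i ∈ P, g i * a + ∑ i ∈ Finset.univ \ P, g i * a = ∑ i, g i * a := by
      rw [← Finset.sum_sdiff (Finset.subset_univ P)]; ring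
    rw [h1, ← Finset.sum_mul, dep_sum hg, zero_mul]
  linarith



variable {d : ℕ} {Q : Finset (Pt d)}

lemma range_eq_coe_image (P : Finset {x // x ∈ Q}) :
    Set.range (fun j : {x // x ∈ P} => ((j : {x // x ∈ Q}) : Pt d))
      = ((P.image Subtype.val : Finset (Pt d)) : Set (Pt d)) := by
  ext y
  simp only [Set.mem_range, Finset.coe_image, Set.mem_image, Finset.mem_coe]
  constructor
  · rintro ⟨j, rfl⟩
    exact ⟨j, j.2, rfl⟩
  · rintro ⟨i, hi, rfl⟩
    exact ⟨⟨i, hi⟩, rfl⟩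

/-- The common point of the relative interiors coming from a nonzero dependence. -/
lemma crossing_of_dep {g : {x // x ∈ Q} → ℝ} (hg : g ∈ Dep d Q) (hgne : g ≠ 0) :
    (intrinsicInterior ℝ (convexHull ℝ
        (((Finset.univ.filter (fun i => 0 < g i)).image Subtype.val : Finset (Pt d)) : Set (Pt d))) ∩
      intrinsicInterior ℝ (convexHull ℝ
        (((Finset.univ.filter (fun i => g i < 0)).image Subtype.val : Finset (Pt d)) : Set (Pt d)))).Nonempty := by
  classical
  set P := Finset.univ.filter (fun i => 0 < g i) with hP
  set N := Finset.univ.filter (fun i => g i < 0) with hN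
  have hPne := pos_nonempty hg hgne
  have hNne := neg_nonempty hg hgne
  set s0 : ℝ := ∑ i ∈ P, g i with hs0
  have hs0pos : 0 < s0 := by
    refine Finset.sum_pos (fun i hi => ?_) hPne
    exact (Finset.mem_filter.1 hi).2
  -- the common point
  set x : Pt d := s0⁻¹ • ∑ i ∈ P, g i • (i : Pt d) with hx
  have hdisj : Disjoint P N := by
    rw [Finset.disjoint_left]
    intro i hi1 hi2
    rw [hP, Finset.mem_filter] at hi1
    rw [hN, Finset.mem_filter] at hi2
    linarith [hi1.2, hi2.2]
  have hzero_outside : ∀ i, i ∉ P ∪ N → g i = 0 := by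
    intro i hi
    rw [Finset.mem_union, hP, hN] at hi
    push_neg at hi
    obtain ⟨h1, h2⟩ := hi
    rw [Finset.mem_filter] at h1 h2
    push_neg at h1 h2
    have := h1 (Finset.mem_univ i)
    have := h2 (Finset.mem_univ i)
    linarith
  have hsum_split : ∑ i ∈ P, g i + ∑ i ∈ N, g i = 0 := by
    have h1 : ∑ i ∈ P ∪ N, g i = ∑ i, g i := by
      refine Finset.sum_subset (Finset.subset_univ _) ?_
      intro i _ hi
      exact hzero_outside i hi
    rw [Finset.sum_union hdisj] at h1
    rw [h1, dep_sum hg]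
  have hcombo_split : (∑ i ∈ P, g i • (i : Pt d)) + ∑ i ∈ N, g i • (i : Pt d) = 0 := by
    have h1 : ∑ i ∈ P ∪ N, g i • (i : Pt d) = ∑ i, g i • (i : Pt d) := by
      refine Finset.sum_subset (Finset.subset_univ _) ?_
      intro i _ hi
      rw [hzero_outside i hi, zero_smul]
    rw [Finset.sum_union hdisj] at h1
    rw [h1, dep_combo hg]
  haveI hPinst : Nonempty {j // j ∈ P} := by
    obtain ⟨i, hi⟩ := hPne
    exact ⟨⟨i, hP ▸ hi⟩⟩
  haveI hNinst : Nonempty {j // j ∈ N} := by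
    obtain ⟨i, hi⟩ := hNne
    exact ⟨⟨i, hN ▸ hi⟩⟩
  -- membership on the positive side
  have hB : x ∈ intrinsicInterior ℝ (convexHull ℝ
      ((P.image Subtype.val : Finset (Pt d)) : Set (Pt d))) := by
    have hmem := pos_combo_mem_intrinsicInterior
      (p := fun j : {j // j ∈ P} => ((j : {x // x ∈ Q}) : Pt d))
      (w := fun j => g (j : {x // x ∈ Q}) / s0)
      (fun j => div_pos (Finset.mem_filter.1 j.2).2 hs0pos) ?_
    · rw [range_eq_coe_image] at hmem
      convert hmem using 2
      rw [hx, Finset.univ_eq_attach, ← Finset.sum_attach P (fun i => g i • (i : Pt d))]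
      rw [Finset.smul_sum]
      refine Finset.sum_congr rfl fun j _ => ?_
      simp [div_eq_inv_mul, mul_smul]
    · rw [← Finset.sum_div, Finset.univ_eq_attach, Finset.sum_attach P g, ← hs0]
      exact div_self (ne_of_gt hs0pos)
  have hC : x ∈ intrinsicInterior ℝ (convexHull ℝ
      ((N.image Subtype.val : Finset (Pt d)) : Set (Pt d))) := by
    have hmem := pos_combo_mem_intrinsicInterior
      (p := fun j : {j // j ∈ N} => ((j : {x // x ∈ Q}) : Pt d))
      (w := fun j => -g (j : {x // x ∈ Q}) / s0)
      (fun j => div_pos (by have hj := (Finset.mem_filter.1 j.2).2; linarith) hs0pos) ?_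
    · rw [range_eq_coe_image] at hmem
      convert hmem using 2
      have hval : ∑ j : {j // j ∈ N}, (-g (j : {x // x ∈ Q}) / s0) • ((j : {x // x ∈ Q}) : Pt d)
          = s0⁻¹ • ∑ i ∈ N, (-g i) • (i : Pt d) := by
        rw [Finset.univ_eq_attach, ← Finset.sum_attach N (fun i => (-g i) • (i : Pt d))]
        rw [Finset.smul_sum]
        refine Finset.sum_congr rfl fun j _ => ?_
        simp [div_eq_inv_mul, mul_smul]
      rw [hval, hx]
      congr 1
      have : ∑ i ∈ N, (-g i) • (i : Pt d) = -∑ i ∈ N, g i • (i : Pt d) := by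
        rw [← Finset.sum_neg_distrib]
        refine Finset.sum_congr rfl fun i _ => ?_
        rw [neg_smul]
      rw [this]
      exact eq_neg_of_add_eq_zero_left hcombo_split
    · have : ∑ j : {j // j ∈ N}, -g (j : {x // x ∈ Q}) / s0
          = (∑ i ∈ N, -g i) / s0 := by
        rw [← Finset.sum_div, Finset.univ_eq_attach, Finset.sum_attach N (fun i => -g i)]
      rw [this]
      have h2 : ∑ i ∈ N, -g i = s0 := by
        rw [Finset.sum_neg_distrib]
        linarith [hsum_split]
      rw [h2]
      exact div_self (ne_of_gt hs0pos)
  exact ⟨x, hB, hC⟩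



variable {d : ℕ} {Q : Finset (Pt d)}

lemma exists_beta (hcard : Q.card = d + 5) (hgen : GenPos d Q) :
    ∃ β : Finset {x // x ∈ Q} → Finset {x // x ∈ Q},
    ∃ lam : Finset {x // x ∈ Q} → ({x // x ∈ Q} → ℝ),
      (∀ T, T.card = 3 →
        lam T ∈ Dep d Q ∧ lam T ≠ 0 ∧
        β T = Finset.univ.filter (fun i => 0 < lam T i) ∧
        Finset.univ \ β T = Finset.univ.filter (fun i => lam T i < 0)) ∧
      (∀ T T', T.card = 3 → T'.card = 3 → β T = β T' → T = T') := by
  classical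
  -- choose a basic vanishing dependence for each triple
  have hlam0ex : ∀ T : Finset {x // x ∈ Q}, ∃ g : {x // x ∈ Q} → ℝ,
      T.card = 3 → (g ∈ Dep d Q ∧ g ≠ 0 ∧ ∀ i ∈ T, g i = 0) := by
    intro T
    by_cases hT : T.card = 3
    · obtain ⟨g, h1, h2, h3⟩ := exists_vanishing hcard T hT
      exact ⟨g, fun _ => ⟨h1, h2, h3⟩⟩
    · exact ⟨0, fun h => absurd h hT⟩
  choose lam0 hlam0 using hlam0ex
  -- zeros of `lam0 T` are exactly `T`
  have hzeros : ∀ T : Finset {x // x ∈ Q}, T.card = 3 →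
      ∀ i, lam0 T i = 0 ↔ i ∈ T := by
    intro T hT i
    obtain ⟨hmem, hne, hvan⟩ := hlam0 T hT
    refine ⟨fun h0 => ?_, fun hi => hvan i hi⟩
    by_contra hiT
    apply hne
    refine dep_eq_zero_of_many_zeros hcard hgen hmem (insert i T) ?_ ?_
    · rw [Finset.card_insert_of_notMem hiT, hT]
    · intro j hj
      rcases Finset.mem_insert.1 hj with rfl | hjT
      · exact h0
      · exact hvan j hjT
  -- choose `f` not vanishing on any `lam0 T`
  set triples : Finset (Finset {x // x ∈ Q}) := Finset.univ.powersetCard 3 with htriples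
  have htriples_mem : ∀ T, T ∈ triples ↔ T.card = 3 := by
    intro T
    rw [htriples, Finset.mem_powersetCard_univ]
  have hvecs : ∀ g ∈ triples.image lam0, g ≠ (0 : {x // x ∈ Q} → ℝ) := by
    intro g hg
    rw [Finset.mem_image] at hg
    obtain ⟨T, hT, rfl⟩ := hg
    exact (hlam0 T ((htriples_mem T).1 hT)).2.1
  obtain ⟨f, hf⟩ := exists_dual_ne_zero (M := {x // x ∈ Q} → ℝ)
      (triples.image lam0) hvecs
  have hf0 : ∀ T : Finset {x // x ∈ Q}, T.card = 3 → f (lam0 T) ≠ 0 := by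
    intro T hT
    exact hf _ (Finset.mem_image_of_mem lam0 ((htriples_mem T).2 hT))
  -- the normalized vanishing dependence
  set v : Finset {x // x ∈ Q} → ({x // x ∈ Q} → ℝ) :=
    fun T => (f (lam0 T))⁻¹ • lam0 T with hv
  have hvmem : ∀ T, T.card = 3 → v T ∈ Dep d Q :=
    fun T hT => Submodule.smul_mem _ _ (hlam0 T hT).1
  have hfv : ∀ T, T.card = 3 → f (v T) = 1 := by
    intro T hT
    rw [hv]
    simp only [map_smul, smul_eq_mul]
    exact inv_mul_cancel₀ (hf0 T hT)
  have hvzero : ∀ T, T.card = 3 → ∀ i, v T i = 0 ↔ i ∈ T := by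
    intro T hT i
    rw [hv]
    simp only [Pi.smul_apply, smul_eq_mul]
    rw [mul_eq_zero]
    constructor
    · rintro (h | h)
      · exact absurd h (inv_ne_zero (hf0 T hT))
      · exact (hzeros T hT i).1 h
    · intro hi
      exact Or.inr ((hzeros T hT i).2 hi)
  -- choose coordinate-like dependences
  have hwex : ∀ (T : Finset {x // x ∈ Q}) (r : {x // x ∈ Q}),
      ∃ g : {x // x ∈ Q} → ℝ, T.card = 3 →
        (g ∈ Dep d Q ∧ ∀ i ∈ T, g i = (if i = r then 1 else 0)) := by
    intro T r
    by_cases hT : T.card = 3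
    · obtain ⟨g, h1, h2⟩ := dep_surj hcard hgen hT (fun i => if i = r then 1 else 0)
      exact ⟨g, fun _ => ⟨h1, h2⟩⟩
    · exact ⟨0, fun h => absurd h hT⟩
  choose w hw using hwex
  set u : Finset {x // x ∈ Q} → {x // x ∈ Q} → ({x // x ∈ Q} → ℝ) :=
    fun T r => w T r - (f (w T r)) • v T with hu
  have humem : ∀ T, T.card = 3 → ∀ r, u T r ∈ Dep d Q := by
    intro T hT r
    exact Submodule.sub_mem _ (hw T r hT).1 (Submodule.smul_mem _ _ (hvmem T hT))
  have hfu : ∀ T, T.card = 3 → ∀ r, f (u T r) = 0 := by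
    intro T hT r
    rw [hu]
    simp only [map_sub, map_smul, smul_eq_mul]
    rw [hfv T hT]
    ring
  have huT : ∀ T, T.card = 3 → ∀ r ∈ T, ∀ q ∈ T,
      u T r q = if q = r then 1 else 0 := by
    intro T hT r _ q hq
    rw [hu]
    simp only [Pi.sub_apply, Pi.smul_apply, smul_eq_mul]
    rw [(hw T r hT).2 q hq, (hvzero T hT q).2 hq]
    ring
  have hune : ∀ T, T.card = 3 → ∀ r ∈ T, u T r ≠ 0 := by
    intro T hT r hr h0
    have := congrFun h0 r
    rw [huT T hT r hr r hr] at this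
    simp at this
  -- choose φ not vanishing on any `u T r`
  have huvecs : ∀ g ∈ (triples.sigma (fun T => T)).image (fun p => u p.1 p.2),
      g ≠ (0 : {x // x ∈ Q} → ℝ) := by
    intro g hg
    rw [Finset.mem_image] at hg
    obtain ⟨p, hp, rfl⟩ := hg
    rw [Finset.mem_sigma] at hp
    exact hune p.1 ((htriples_mem p.1).1 hp.1) p.2 hp.2
  obtain ⟨φ, hφ⟩ := exists_dual_ne_zero (M := {x // x ∈ Q} → ℝ)
      ((triples.sigma (fun T => T)).image (fun p => u p.1 p.2)) huvecs
  have hφ0 : ∀ T, T.card = 3 → ∀ r ∈ T, φ (u T r) ≠ 0 := by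
    intro T hT r hr
    refine hφ _ ?_
    rw [Finset.mem_image]
    exact ⟨⟨T, r⟩, Finset.mem_sigma.2 ⟨(htriples_mem T).2 hT, hr⟩, rfl⟩
  -- signs
  set sg : Finset {x // x ∈ Q} → {x // x ∈ Q} → ℝ :=
    fun T r => if 0 < φ (u T r) then 1 else -1 with hsg
  have hsgne : ∀ T r, sg T r ≠ 0 := by
    intro T r
    rw [hsg]
    by_cases h : 0 < φ (u T r) <;> simp [h]
  have hsgmul : ∀ T, T.card = 3 → ∀ r ∈ T, 0 < sg T r * φ (u T r) := by
    intro T hT r hr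
    rw [hsg]
    rcases lt_trichotomy (φ (u T r)) 0 with h | h | h
    · simp only [if_neg (by linarith : ¬ 0 < φ (u T r))]
      nlinarith
    · exact absurd h (hφ0 T hT r hr)
    · simp only [if_pos h]
      nlinarith
  -- the perturbation
  set μ : Finset {x // x ∈ Q} → ({x // x ∈ Q} → ℝ) :=
    fun T => ∑ r ∈ T, sg T r • u T r with hμ
  have hμmem : ∀ T, T.card = 3 → μ T ∈ Dep d Q := by
    intro T hT
    exact Submodule.sum_mem _ (fun r _ => Submodule.smul_mem _ _ (humem T hT r))
  have hfμ : ∀ T, T.card = 3 → f (μ T) = 0 := by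
    intro T hT
    rw [hμ]
    simp only [map_sum, map_smul, smul_eq_mul]
    refine Finset.sum_eq_zero fun r _ => ?_
    rw [hfu T hT r]
    ring
  have hμT : ∀ T, T.card = 3 → ∀ q ∈ T, μ T q = sg T q := by
    intro T hT q hq
    rw [hμ]
    have : ∀ r ∈ T, (sg T r • u T r) q = if q = r then sg T r else 0 := by
      intro r hr
      simp only [Pi.smul_apply, smul_eq_mul]
      rw [huT T hT r hr q hq]
      by_cases h : q = r <;> simp [h]
    simp only [Finset.sum_apply]
    rw [Finset.sum_congr rfl this]
    rw [Finset.sum_ite_eq T q (fun r => sg T r)]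
    simp [hq]
  -- the scale of the perturbation
  have hQT : ∀ T : Finset {x // x ∈ Q}, T.card = 3 →
      (Finset.univ \ T).Nonempty := by
    intro T hT
    rw [← Finset.card_pos, Finset.card_sdiff_of_subset (Finset.subset_univ T),
      Finset.card_univ, Fintype.card_coe, hcard, hT]
    omega
  set ε : Finset {x // x ∈ Q} → ℝ := fun T =>
    if hT : T.card = 3 then
      (Finset.univ \ T).inf' (hQT T hT) (fun q => |v T q| / (|μ T q| + 1))
    else 1 with hε
  have hεpos : ∀ T, T.card = 3 → 0 < ε T := by
    intro T hT
    rw [hε]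
    simp only [dif_pos hT]
    rw [Finset.lt_inf'_iff]
    intro q hq
    rw [Finset.mem_sdiff] at hq
    have hvq : v T q ≠ 0 := fun h => hq.2 ((hvzero T hT q).1 h)
    have : 0 < |v T q| := abs_pos.2 hvq
    positivity
  have hεsmall : ∀ T, T.card = 3 → ∀ q ∉ T, |ε T * μ T q| < |v T q| := by
    intro T hT q hq
    have hle : ε T ≤ |v T q| / (|μ T q| + 1) := by
      rw [hε]
      simp only [dif_pos hT]
      exact Finset.inf'_le _ (Finset.mem_sdiff.2 ⟨Finset.mem_univ q, hq⟩)
    have hvq : v T q ≠ 0 := fun h => hq ((hvzero T hT q).1 h)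
    have hvpos : 0 < |v T q| := abs_pos.2 hvq
    have hεp := hεpos T hT
    rw [abs_mul, abs_of_pos hεp]
    calc ε T * |μ T q| ≤ (|v T q| / (|μ T q| + 1)) * |μ T q| := by
          refine mul_le_mul_of_nonneg_right hle (abs_nonneg _)
      _ < (|v T q| / (|μ T q| + 1)) * (|μ T q| + 1) := by
          refine mul_lt_mul_of_pos_left (lt_add_one _) ?_
          positivity
      _ = |v T q| := by field_simp
  -- the full-support dependence
  set lam : Finset {x // x ∈ Q} → ({x // x ∈ Q} → ℝ) :=
    fun T => v T + ε T • μ T with hlam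
  have hlammem : ∀ T, T.card = 3 → lam T ∈ Dep d Q := by
    intro T hT
    exact Submodule.add_mem _ (hvmem T hT) (Submodule.smul_mem _ _ (hμmem T hT))
  have hflam : ∀ T, T.card = 3 → f (lam T) = 1 := by
    intro T hT
    rw [hlam]
    simp only [map_add, map_smul, smul_eq_mul]
    rw [hfv T hT, hfμ T hT]
    ring
  have hlamne : ∀ T, T.card = 3 → lam T ≠ 0 := by
    intro T hT h0
    have := hflam T hT
    rw [h0, map_zero] at this
    norm_num at this
  have hlamT : ∀ T, T.card = 3 → ∀ q ∈ T, lam T q = ε T * sg T q := by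
    intro T hT q hq
    rw [hlam]
    simp only [Pi.add_apply, Pi.smul_apply, smul_eq_mul]
    rw [(hvzero T hT q).2 hq, hμT T hT q hq]
    ring
  -- off `T`, `lam T` has the same (strict) sign as `v T`
  have hsign_pos : ∀ T, T.card = 3 → ∀ q ∉ T, (0 < v T q ↔ 0 < lam T q) := by
    intro T hT q hq
    have hs := hεsmall T hT q hq
    have hvq : v T q ≠ 0 := fun h => hq ((hvzero T hT q).1 h)
    rw [hlam]
    simp only [Pi.add_apply, Pi.smul_apply, smul_eq_mul]
    rw [abs_lt] at hs
    constructor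
    · intro h
      rw [abs_of_pos h] at hs
      linarith [hs.1]
    · intro h
      by_contra hc
      push_neg at hc
      have hlt : v T q < 0 := lt_of_le_of_ne hc hvq
      rw [abs_of_neg hlt] at hs
      linarith [hs.2]
  have hsign_neg : ∀ T, T.card = 3 → ∀ q ∉ T, (v T q < 0 ↔ lam T q < 0) := by
    intro T hT q hq
    have hs := hεsmall T hT q hq
    have hvq : v T q ≠ 0 := fun h => hq ((hvzero T hT q).1 h)
    rw [hlam]
    simp only [Pi.add_apply, Pi.smul_apply, smul_eq_mul]
    rw [abs_lt] at hs
    constructor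
    · intro h
      rw [abs_of_neg h] at hs
      linarith [hs.2]
    · intro h
      by_contra hc
      push_neg at hc
      have hlt : 0 < v T q := lt_of_le_of_ne hc (Ne.symm hvq)
      rw [abs_of_pos hlt] at hs
      linarith [hs.1]
  have hlamnz : ∀ T, T.card = 3 → ∀ q, lam T q ≠ 0 := by
    intro T hT q
    by_cases hq : q ∈ T
    · rw [hlamT T hT q hq]
      exact mul_ne_zero (ne_of_gt (hεpos T hT)) (hsgne T q)
    · have hvq : v T q ≠ 0 := fun h => hq ((hvzero T hT q).1 h)
      rcases lt_or_gt_of_ne hvq with h | h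
      · exact ne_of_lt ((hsign_neg T hT q hq).1 h)
      · exact ne_of_gt ((hsign_pos T hT q hq).1 h)
  -- the positive part
  set β : Finset {x // x ∈ Q} → Finset {x // x ∈ Q} :=
    fun T => Finset.univ.filter (fun i => 0 < lam T i) with hβ
  have hβcompl : ∀ T, T.card = 3 →
      Finset.univ \ β T = Finset.univ.filter (fun i => lam T i < 0) := by
    intro T hT
    ext i
    rw [Finset.mem_sdiff, hβ, Finset.mem_filter, Finset.mem_filter]
    constructor
    · rintro ⟨hu, hnot⟩
      refine ⟨hu, ?_⟩
      have h1 : ¬ 0 < lam T i := fun h => hnot ⟨hu, h⟩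
      push_neg at h1
      exact lt_of_le_of_ne h1 (hlamnz T hT i)
    · rintro ⟨hu, hlt⟩
      exact ⟨hu, fun hmem => absurd hmem.2 (by linarith)⟩
  -- the representation of dependences in terms of the basis adapted to `T`
  have hrepr : ∀ T, T.card = 3 → ∀ x ∈ Dep d Q,
      x = f x • v T + ∑ r ∈ T, x r • u T r := by
    intro T hT x hx
    set y : {x // x ∈ Q} → ℝ := x - f x • v T - ∑ r ∈ T, x r • u T r with hy
    have hymem : y ∈ Dep d Q := by
      refine Submodule.sub_mem _ (Submodule.sub_mem _ hx
        (Submodule.smul_mem _ _ (hvmem T hT))) ?_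
      exact Submodule.sum_mem _ (fun r _ => Submodule.smul_mem _ _ (humem T hT r))
    have hfy : f y = 0 := by
      rw [hy]
      simp only [map_sub, map_smul, map_sum, smul_eq_mul]
      rw [hfv T hT]
      have : ∑ r ∈ T, x r * f (u T r) = 0 :=
        Finset.sum_eq_zero fun r _ => by rw [hfu T hT r]; ring
      rw [this]
      ring
    have hyT : ∀ q ∈ T, y q = 0 := by
      intro q hq
      rw [hy]
      simp only [Pi.sub_apply, Pi.smul_apply, smul_eq_mul, Finset.sum_apply]
      rw [(hvzero T hT q).2 hq]
      have : ∀ r ∈ T, x r * u T r q = if q = r then x r else 0 := by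
        intro r hr
        rw [huT T hT r hr q hq]
        by_cases h : q = r <;> simp [h]
      rw [Finset.sum_congr rfl this, Finset.sum_ite_eq T q (fun r => x r)]
      simp [hq]
    have hy0 : y = 0 := by
      obtain ⟨c, hc⟩ := dep_multiple hcard hgen (hlam0 T hT).1 hymem hT
        (hlam0 T hT).2.2 hyT (hlam0 T hT).2.1
      have hfc : f y = c * f (lam0 T) := by rw [hc]; simp
      rw [hfy] at hfc
      have hc0 : c = 0 := by
        rcases mul_eq_zero.1 hfc.symm with h | h
        · exact h
        · exact absurd h (hf0 T hT)
      rw [hc, hc0, zero_smul]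
    have h2 : x - (f x • v T + ∑ r ∈ T, x r • u T r) = 0 := by
      rw [← hy0, hy]; abel
    have h3 := sub_eq_zero.1 h2
    exact h3
  -- the value of φ on dependences
  have hφrepr : ∀ T, T.card = 3 → ∀ x ∈ Dep d Q,
      φ x = f x * φ (v T) + ∑ r ∈ T, x r * φ (u T r) := by
    intro T hT x hx
    conv_lhs => rw [hrepr T hT x hx]
    simp only [map_add, map_sum, map_smul, smul_eq_mul]
  -- strict minimality of `v T` on its sign cone
  have hmin : ∀ T, T.card = 3 → ∀ x ∈ Dep d Q, f x = 1 →
      (∀ r ∈ T, 0 ≤ sg T r * x r) →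
      φ (v T) ≤ φ x ∧ (φ x = φ (v T) → x = v T) := by
    intro T hT x hx hfx hsgn
    have hφx := hφrepr T hT x hx
    have hφv := hφrepr T hT (v T) (hvmem T hT)
    have hvTr : ∀ r ∈ T, v T r = 0 := fun r hr => (hvzero T hT r).2 hr
    have hφv' : φ (v T) = φ (v T) * 1 := by ring
    have hφveq : φ (v T) = f (v T) * φ (v T) := by
      rw [hfv T hT]; ring
    have hsum0 : ∑ r ∈ T, v T r * φ (u T r) = 0 :=
      Finset.sum_eq_zero fun r hr => by rw [hvTr r hr]; ring
    have hterm : ∀ r ∈ T, 0 ≤ x r * φ (u T r) := by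
      intro r hr
      have h1 := hsgmul T hT r hr
      have h2 := hsgn r hr
      have hs2 : sg T r * sg T r = 1 := by
        rw [hsg]
        by_cases h : 0 < φ (u T r) <;> simp [h]
      nlinarith
    have hsumnn : 0 ≤ ∑ r ∈ T, x r * φ (u T r) :=
      Finset.sum_nonneg hterm
    constructor
    · rw [hφx, hfx]
      nlinarith
    · intro heq
      have hzero : ∑ r ∈ T, x r * φ (u T r) = 0 := by
        rw [hφx, hfx] at heq
        linarith
      have hxr : ∀ r ∈ T, x r = 0 := by
        intro r hr
        have hall := (Finset.sum_eq_zero_iff_of_nonneg hterm).1 hzero r hr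
        have h1 := hsgmul T hT r hr
        have hune := hφ0 T hT r hr
        rcases mul_eq_zero.1 hall with h | h
        · exact h
        · exact absurd h hune
      -- x - v T is a dependence vanishing on T with f-value 0
      set y : {x // x ∈ Q} → ℝ := x - v T with hy
      have hymem : y ∈ Dep d Q := Submodule.sub_mem _ hx (hvmem T hT)
      have hfy : f y = 0 := by
        rw [hy, map_sub, hfx, hfv T hT]; ring
      have hyT : ∀ q ∈ T, y q = 0 := by
        intro q hq
        rw [hy]
        simp only [Pi.sub_apply]
        rw [hxr q hq, hvTr q hq]; ring
      obtain ⟨c, hc⟩ := dep_multiple hcard hgen (hlam0 T hT).1 hymem hT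
        (hlam0 T hT).2.2 hyT (hlam0 T hT).2.1
      have hfc : f y = c * f (lam0 T) := by rw [hc]; simp
      rw [hfy] at hfc
      have hc0 : c = 0 := by
        rcases mul_eq_zero.1 hfc.symm with h | h
        · exact h
        · exact absurd h (hf0 T hT)
      have : y = 0 := by rw [hc, hc0, zero_smul]
      rw [hy] at this
      exact sub_eq_zero.1 this
  -- membership of `v T'` in the cone of `T` when the sign patterns agree
  have hcone : ∀ T T', T.card = 3 → T'.card = 3 → β T = β T' →
      ∀ r ∈ T, 0 ≤ sg T r * v T' r := by
    intro T T' hT hT' hββ r hr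
    by_cases hrT' : r ∈ T'
    · rw [(hvzero T' hT' r).2 hrT']
      ring_nf
      exact le_refl 0
    · have hβmem : r ∈ β T ↔ 0 < lam T r := by
        rw [hβ, Finset.mem_filter]
        simp
      have hβmem' : r ∈ β T' ↔ 0 < lam T' r := by
        rw [hβ, Finset.mem_filter]
        simp
      have hlamr : lam T r = ε T * sg T r := hlamT T hT r hr
      rcases lt_trichotomy (sg T r) 0 with hs | hs | hs
      · -- sg T r = -1 : lam T r < 0, so r ∉ β T = β T', so v T' r < 0
        have h1 : ¬ 0 < lam T r := by
          rw [hlamr]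
          nlinarith [hεpos T hT]
        have h2 : ¬ 0 < lam T' r := by
          rw [← hβmem', ← hββ, hβmem]
          exact h1
        have h3 : lam T' r < 0 := by
          rcases lt_trichotomy (lam T' r) 0 with h | h | h
          · exact h
          · exact absurd h (hlamnz T' hT' r)
          · exact absurd h h2
        have h4 : v T' r < 0 := (hsign_neg T' hT' r hrT').2 h3
        nlinarith
      · exact absurd hs (hsgne T r)
      · -- sg T r = 1 : lam T r > 0, so r ∈ β T = β T', so v T' r > 0
        have h1 : 0 < lam T r := by
          rw [hlamr]
          nlinarith [hεpos T hT]
        have h2 : 0 < lam T' r := by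
          rw [← hβmem', ← hββ, hβmem]
          exact h1
        have h4 : 0 < v T' r := by
          by_contra hc
          push_neg at hc
          have hvq : v T' r ≠ 0 := fun h => hrT' ((hvzero T' hT' r).1 h)
          have h5 : v T' r < 0 := lt_of_le_of_ne hc hvq
          have := (hsign_neg T' hT' r hrT').1 h5
          linarith
        nlinarith
  -- injectivity
  have hinj : ∀ T T', T.card = 3 → T'.card = 3 → β T = β T' → T = T' := by
    intro T T' hT hT' hββ
    have h1 := hmin T hT (v T') (hvmem T' hT') (hfv T' hT') (hcone T T' hT hT' hββ)
    have h2 := hmin T' hT' (v T) (hvmem T hT) (hfv T hT) (hcone T' T hT' hT hββ.symm)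
    have heq : φ (v T') = φ (v T) := le_antisymm h2.1 h1.1
    have hveq : v T' = v T := h1.2 heq
    ext i
    rw [← hvzero T hT i, ← hvzero T' hT' i, hveq]
  exact ⟨β, lam, fun T hT => ⟨hlammem T hT, hlamne T hT, rfl, hβcompl T hT⟩, hinj⟩


end Crossing


lemma cube_le_choose (d : ℕ) : d ^ 3 ≤ 6 * Nat.choose (d + 5) 3 := by
  have h := Nat.choose_mul_factorial_mul_factorial (show 3 ≤ d + 5 by omega)
  have h35 : Nat.factorial 3 = 6 := by decide
  have hsub : d + 5 - 3 = d + 2 := by omega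
  rw [h35, hsub] at h
  have f5 : (d+5).factorial = (d+5) * (d+4).factorial := Nat.factorial_succ (d+4)
  have f4 : (d+4).factorial = (d+4) * (d+3).factorial := Nat.factorial_succ (d+3)
  have f3 : (d+3).factorial = (d+3) * (d+2).factorial := Nat.factorial_succ (d+2)
  have h2 : (d + 5).choose 3 * 6 * (d+2).factorial
      = ((d + 5) * (d + 4) * (d + 3)) * (d+2).factorial := by
    rw [h, f5, f4, f3]; ring
  have h3 := Nat.eq_of_mul_eq_mul_right (Nat.factorial_pos (d+2)) h2
  have h4 : d ^ 3 ≤ (d + 5) * (d + 4) * (d + 3) := by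
    calc d ^ 3 = d * d * d := by ring
      _ ≤ (d + 5) * (d + 4) * (d + 3) :=
        Nat.mul_le_mul (Nat.mul_le_mul (by omega) (by omega)) (by omega)
  rw [← h3] at h4
  omega


/-- If `d + 5` points in general position form the vertex set of a
`d`-dimensional `(⌊d/2⌋ - t')`-neighborly polytope, there are `Ω(d³)` crossing
partitions with both parts of size at least `⌊d/2⌋ - t' + 1`. -/
theorem crossing_partitions_nearly_neighborly :
    ∀ t' : ℕ,
      ∃ (c : ℝ) (d₀ : ℕ), 0 < c ∧
        ∀ d : ℕ, d₀ ≤ d → ∀ Q : Finset (Pt d), Q.card = d + 5 → GenPos d Q →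
          ConvexPos d Q → affineSpan ℝ (Q : Set (Pt d)) = ⊤ →
          Neighborly d (d / 2 - t') Q →
          c * d ^ 3 ≤ ((crossingPartitions d Q (d / 2 - t' + 1)).ncard : ℝ) := by
  classical
  intro t'
  refine ⟨1/12, 0, by norm_num, ?_⟩
  intro d _ Q hcard hgen _ _ hneigh
  set m : ℕ := d / 2 - t' with hm
  obtain ⟨β, lam, hprop, hinj⟩ := Crossing.exists_beta hcard hgen
  set triples : Finset (Finset {x // x ∈ Q}) := Finset.univ.powersetCard 3 with htriples
  have htriples_mem : ∀ T, T ∈ triples ↔ T.card = 3 := fun T =>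
    Finset.mem_powersetCard_univ
  set F : Finset {x // x ∈ Q} → Sym2 (Finset (Pt d)) := fun T =>
    s(Finset.image Subtype.val (β T), Finset.image Subtype.val (Finset.univ \ β T)) with hF
  -- each triple gives a crossing partition
  have hmemF : ∀ T ∈ triples, F T ∈ crossingPartitions d Q (m + 1) := by
    intro T hTmem
    have hT := (htriples_mem T).1 hTmem
    obtain ⟨hdep, hne, hβeq, hβceq⟩ := hprop T hT
    refine ⟨Finset.image Subtype.val (β T), Finset.image Subtype.val (Finset.univ \ β T),
      rfl, ?_, ?_, ?_, ?_, ?_⟩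
    · rw [← Finset.image_union]
      rw [Finset.union_sdiff_of_subset (Finset.subset_univ _)]
      rw [Finset.univ_eq_attach]
      exact Finset.attach_image_val
    · exact (Finset.disjoint_image Subtype.val_injective).2 Finset.disjoint_sdiff
    · rw [Finset.card_image_of_injective _ Subtype.val_injective, hβeq]
      exact Crossing.pos_card_ge hneigh hdep hne
    · rw [Finset.card_image_of_injective _ Subtype.val_injective, hβceq,
        Crossing.filter_neg_eq]
      refine Crossing.pos_card_ge hneigh (Submodule.neg_mem _ hdep) ?_
      intro h0
      apply hne
      have := congrArg Neg.neg h0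
      simpa using this
    · have := Crossing.crossing_of_dep hdep hne
      rw [← hβeq, ← hβceq] at this
      exact this
  -- fibers of F have at most two elements
  have hfiber : ∀ p, (triples.filter (fun T => F T = p)).card ≤ 2 := by
    intro p
    by_contra hcon
    push_neg at hcon
    obtain ⟨T1, T2, T3, hT1, hT2, hT3, h12, h13, h23⟩ :=
      Finset.two_lt_card_iff.1 hcon
    rw [Finset.mem_filter] at hT1 hT2 hT3
    have hkey : ∀ T T', T ∈ triples → T' ∈ triples → F T = F T' →
        β T = β T' ∨ β T = Finset.univ \ β T' := by
      intro T T' hT hT' hFF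
      rw [hF] at hFF
      rcases Sym2.eq_iff.1 hFF with ⟨h1, _⟩ | ⟨h1, _⟩
      · exact Or.inl (Finset.image_injective Subtype.val_injective h1)
      · exact Or.inr (Finset.image_injective Subtype.val_injective h1)
    have e12 := hkey T1 T2 hT1.1 hT2.1 (hT1.2.trans hT2.2.symm)
    have e13 := hkey T1 T3 hT1.1 hT3.1 (hT1.2.trans hT3.2.symm)
    have hc1 := (htriples_mem T1).1 hT1.1
    have hc2 := (htriples_mem T2).1 hT2.1
    have hc3 := (htriples_mem T3).1 hT3.1
    rcases e12 with h | h2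
    · exact h12 (hinj T1 T2 hc1 hc2 h)
    rcases e13 with h | h3
    · exact h13 (hinj T1 T3 hc1 hc3 h)
    have h6 : Finset.univ \ β T2 = Finset.univ \ β T3 := h2.symm.trans h3
    have h7 : β T2 = β T3 := by
      ext i
      have h8 := Finset.ext_iff.1 h6 i
      simp only [Finset.mem_sdiff, Finset.mem_univ, true_and] at h8
      exact not_iff_not.1 h8
    exact h23 (hinj T2 T3 hc2 hc3 h7)
  -- finiteness of the set of crossing partitions
  have hfin : (crossingPartitions d Q (m + 1)).Finite := by
    have hsub : crossingPartitions d Q (m + 1) ⊆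
        (fun bc : Finset (Pt d) × Finset (Pt d) => s(bc.1, bc.2)) ''
          ↑(Q.powerset ×ˢ Q.powerset) := by
      rintro p ⟨B, C, rfl, hBC, _, _, _, _⟩
      refine ⟨(B, C), ?_, rfl⟩
      rw [Finset.coe_product]
      constructor
      · rw [Finset.mem_coe, Finset.mem_powerset]
        rw [← hBC]; exact Finset.subset_union_left
      · rw [Finset.mem_coe, Finset.mem_powerset]
        rw [← hBC]; exact Finset.subset_union_right
    exact Set.Finite.subset ((Q.powerset ×ˢ Q.powerset).finite_toSet.image _) hsub
  -- counting
  have hcount : triples.card ≤ 2 * (triples.image F).card := by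
    rw [Finset.card_eq_sum_card_fiberwise
      (fun T hT => Finset.mem_image_of_mem F hT)]
    calc ∑ p ∈ triples.image F, (triples.filter (fun T => F T = p)).card
        ≤ ∑ _p ∈ triples.image F, 2 := Finset.sum_le_sum (fun p _ => hfiber p)
      _ = 2 * (triples.image F).card := by rw [Finset.sum_const, smul_eq_mul, mul_comm]
  have himg_le : (triples.image F).card ≤ (crossingPartitions d Q (m + 1)).ncard := by
    rw [← Set.ncard_coe_finset]
    refine Set.ncard_le_ncard ?_ hfin
    intro p hp
    rw [Finset.mem_coe, Finset.mem_image] at hp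
    obtain ⟨T, hT, rfl⟩ := hp
    exact hmemF T hT
  have htriples_card : triples.card = Nat.choose (d + 5) 3 := by
    rw [htriples, Finset.card_powersetCard, Finset.card_univ, Fintype.card_coe, hcard]
  have hnat : d ^ 3 ≤ 12 * (crossingPartitions d Q (m + 1)).ncard := by
    have h1 := cube_le_choose d
    rw [← htriples_card] at h1
    omega
  have hreal : (d : ℝ) ^ 3 ≤ 12 * ((crossingPartitions d Q (m + 1)).ncard : ℝ) := by
    exact_mod_cast hnat
  linarith
end
end

section
/- Let t ≥ 1 and d ≥ t + 2 be integers, and let V be a set of 2d points in general position in ℝ^d that is in convex position and forms the vertex set of a d-dimensional convex polytope conv(V) which is t-neighborly but not (t+1)-neighborly. Then there exist disjoint subsets B and C of V with |B| = t + 1 and |C| = d − t + 1 such that the relative interiors of the convex hulls of B and of C have a common point (i.e., a t-simplex and a (d−t)-simplex spanned by vertices of V form a crossing pair). -/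
noncomputable section

attribute [local instance] Classical.propDecidable

section AuxCrossing
open Finset

lemma faceOf_of_disjoint {d : ℕ} {S V : Finset (Pt d)} (hSV : S ⊆ V)
    (h : ∀ x : Pt d, x ∈ affineSpan ℝ (S : Set (Pt d)) →
      x ∉ convexHull ℝ (((V \ S : Finset (Pt d))) : Set (Pt d))) :
    IsFaceOf d S V := by
  rcases S.eq_empty_or_nonempty with rfl | ⟨s₀, hs₀⟩
  · exact ⟨hSV, 0, 1, by simp, fun y _ _ => by simp⟩
  refine ⟨hSV, ?_⟩
  have hdisj : Disjoint (convexHull ℝ (((V \ S : Finset (Pt d))) : Set (Pt d)))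
      ((affineSpan ℝ (S : Set (Pt d)) : Set (Pt d))) :=
    Set.disjoint_left.mpr fun x hx h2 => h x h2 hx
  obtain ⟨f, u, v, hfu, huv, hvf⟩ := geometric_hahn_banach_compact_closed
    (convex_convexHull ℝ _) ((V \ S).finite_toSet.isCompact_convexHull ℝ)
    (AffineSubspace.convex _)
    (AffineSubspace.closed_of_finiteDimensional (affineSpan ℝ (S : Set (Pt d)))) hdisj
  -- f is constant on the affine span
  have hconst : ∀ p ∈ affineSpan ℝ (S : Set (Pt d)), ∀ q ∈ affineSpan ℝ (S : Set (Pt d)),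
      f p = f q := by
    intro p hp q hq
    by_contra hne
    have hδ : f q - f p ≠ 0 := sub_ne_zero.mpr fun e => hne e.symm
    set r : ℝ := (v - f p - 1) / (f q - f p) with hr
    have hmem : r • (q -ᵥ p) +ᵥ p ∈ affineSpan ℝ (S : Set (Pt d)) :=
      AffineSubspace.smul_vsub_vadd_mem _ r hq hp hp
    have := hvf _ hmem
    have hcalc : f (r • (q -ᵥ p) +ᵥ p) = v - 1 := by
      have h1 : f (r • (q - p) + p) = r * (f q - f p) + f p := by
        simp [map_add, map_smul, map_sub, mul_sub]
      have h2 : r * (f q - f p) = v - f p - 1 := div_mul_cancel₀ _ hδ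
      rw [vsub_eq_sub, vadd_eq_add, h1, h2]; ring
    rw [hcalc] at this; linarith
  have hs₀span : (s₀ : Pt d) ∈ affineSpan ℝ (S : Set (Pt d)) :=
    subset_affineSpan ℝ _ hs₀
  refine ⟨f.toLinearMap, f s₀, fun x hx => hconst _ (subset_affineSpan ℝ _ hx) _ hs₀span, ?_⟩
  intro y hy hyS
  have : y ∈ convexHull ℝ (((V \ S : Finset (Pt d))) : Set (Pt d)) :=
    subset_convexHull ℝ _ (by simp [hy, hyS])
  have := hfu y this
  have := hvf _ hs₀span
  simpa using by linarith

attribute [local instance] AffineSubspace.toNormedAddTorsor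

open Set Finset

lemma mem_intrinsicInterior_of_pos {d : ℕ} (s : Finset (Pt d))
    (hind : AffineIndependent ℝ ((↑) : {x // x ∈ (s : Set (Pt d))} → Pt d))
    (hs : s.Nonempty) (w : Pt d → ℝ) (hpos : ∀ v ∈ s, 0 < w v)
    (hsum : ∑ v ∈ s, w v = 1) :
    (∑ v ∈ s, w v • v) ∈ intrinsicInterior ℝ (convexHull ℝ (s : Set (Pt d))) := by
  classical
  set A : Set (Pt d) := convexHull ℝ (s : Set (Pt d)) with hA
  have hsub : (s : Set (Pt d)) ⊆ (affineSpan ℝ A : Set (Pt d)) := fun v hv =>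
    subset_affineSpan ℝ A (subset_convexHull ℝ _ hv)
  obtain ⟨v₀, hv₀⟩ := hs
  haveI : Nonempty (affineSpan ℝ A) := ⟨⟨v₀, hsub hv₀⟩⟩
  set P : AffineSubspace ℝ (Pt d) := affineSpan ℝ A with hP
  let ι := {x // x ∈ (s : Set (Pt d))}
  let pe : ι → P := fun v => ⟨v.1, hsub v.2⟩
  have hpecoe : (P.subtype ∘ pe) = ((↑) : ι → Pt d) := rfl
  have hpe : AffineIndependent ℝ pe :=
    AffineIndependent.of_comp P.subtype (by rw [hpecoe]; exact hind)
  -- span of pe is top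
  have himg : Subtype.val '' Set.range pe = (s : Set (Pt d)) := by
    ext v
    constructor
    · rintro ⟨q, ⟨i, rfl⟩, rfl⟩; exact i.2
    · intro hv; exact ⟨pe ⟨v, hv⟩, ⟨⟨v, hv⟩, rfl⟩, rfl⟩
  have htot : affineSpan ℝ (Set.range pe) = ⊤ := by
    rw [eq_top_iff]
    rintro p -
    have hp : (p : Pt d) ∈ affineSpan ℝ (s : Set (Pt d)) := by
      rw [← affineSpan_convexHull]; exact p.2
    have hmap : (affineSpan ℝ (Set.range pe)).map P.subtype
        = affineSpan ℝ (s : Set (Pt d)) := by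
      rw [AffineSubspace.map_span, AffineSubspace.coe_subtype, himg]
    have hpm : (p : Pt d) ∈ (affineSpan ℝ (Set.range pe)).map P.subtype := by
      rw [hmap]; exact hp
    obtain ⟨q, hq, hqp⟩ := AffineSubspace.mem_map.mp hpm
    have hqe : q = p := Subtype.coe_injective hqp
    rwa [hqe] at hq
  -- move to the direction vector space
  set D := P.direction
  let e : P ≃ᵃⁱ[ℝ] D := AffineIsometryEquiv.constVSub ℝ ⟨v₀, hsub hv₀⟩
  let bfun : ι → D := fun i => e (pe i)
  have hbind : AffineIndependent ℝ bfun := hpe.map' e.toAffineMap (by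
    rw [e.coe_toAffineMap]; exact e.injective)
  have hbtot : affineSpan ℝ (Set.range bfun) = ⊤ := by
    have hr : Set.range bfun = ⇑e.toAffineEquiv '' Set.range pe := by
      rw [← Set.range_comp]; rfl
    rw [hr, ← AffineEquiv.span_eq_top_iff, htot]
  let b : AffineBasis ι ℝ D := ⟨bfun, hbind, hbtot⟩
  have hbcoe : ⇑b = bfun := rfl
  -- weights on ι
  set wι : ι → ℝ := fun i => w i with hwι
  have hwsum : ∑ i : ι, wι i = 1 := by
    rw [← hsum]; exact Finset.sum_finset_coe (fun v => w v) s
  -- the point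
  set xP : P := Finset.univ.affineCombination ℝ pe wι with hxP
  have hxcoe : (xP : Pt d) = ∑ v ∈ s, w v • v := by
    have h1 : P.subtype xP = Finset.univ.affineCombination ℝ (P.subtype ∘ pe) wι :=
      Finset.map_affineCombination _ pe wι hwsum P.subtype
    rw [AffineSubspace.subtype_apply] at h1
    rw [h1, hpecoe, Finset.affineCombination_eq_linear_combination _ _ _ hwsum]
    exact Finset.sum_finset_coe (fun v => w v • v) s
  -- the preimage of A equals the preimage under e of the convex hull of the basis
  have hgpre : (Subtype.val ⁻¹' A : Set P) = ⇑e ⁻¹' (convexHull ℝ (Set.range bfun)) := by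
    let g : D →ᵃ[ℝ] Pt d := P.subtype.comp e.symm.toAffineMap
    have hg : ∀ y : D, g y = ((e.symm y : P) : Pt d) := fun y => rfl
    have hginj : Function.Injective g := by
      intro a b hab
      rw [hg, hg] at hab
      exact e.symm.injective (Subtype.coe_injective hab)
    have hgb : g '' Set.range bfun = (s : Set (Pt d)) := by
      ext v
      constructor
      · rintro ⟨y, ⟨i, rfl⟩, rfl⟩
        have : g (bfun i) = (i : Pt d) := by
          rw [hg]; simp only [bfun, AffineIsometryEquiv.symm_apply_apply]; rfl
        rw [this]; exact i.2
      · intro hv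
        refine ⟨bfun ⟨v, hv⟩, ⟨⟨v, hv⟩, rfl⟩, ?_⟩
        rw [hg]; simp only [bfun, AffineIsometryEquiv.symm_apply_apply]; rfl
    have hghull : g '' (convexHull ℝ (Set.range bfun)) = A := by
      rw [AffineMap.image_convexHull, hgb]
    ext p
    simp only [Set.mem_preimage]
    constructor
    · intro hpA
      have : (p : Pt d) ∈ g '' (convexHull ℝ (Set.range bfun)) := by rw [hghull]; exact hpA
      obtain ⟨y, hy, hyp⟩ := this
      have hgep : g (e p) = (p : Pt d) := by
        rw [hg]; simp only [AffineIsometryEquiv.symm_apply_apply]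
      have : y = e p := hginj (by rw [hyp, hgep])
      rwa [this] at hy
    · intro hep
      have : g (e p) ∈ g '' (convexHull ℝ (Set.range bfun)) := ⟨e p, hep, rfl⟩
      rw [hghull] at this
      have hgep : g (e p) = (p : Pt d) := by
        rw [hg]; simp only [AffineIsometryEquiv.symm_apply_apply]
      rwa [hgep] at this
  -- conclude
  rw [mem_intrinsicInterior]
  refine ⟨xP, ?_, hxcoe⟩
  rw [hgpre]
  have hEq : (⇑e ⁻¹' (convexHull ℝ (Set.range bfun)) : Set P)
      = ⇑e.toHomeomorph ⁻¹' (convexHull ℝ (Set.range bfun)) := rfl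
  rw [hEq, ← Homeomorph.preimage_interior]
  have hexP : e xP = Finset.univ.affineCombination ℝ bfun wι := by
    have := Finset.map_affineCombination Finset.univ pe wι hwsum e.toAffineMap
    rw [e.coe_toAffineMap] at this
    exact this
  show e xP ∈ interior (convexHull ℝ (Set.range bfun))
  have : interior (convexHull ℝ (Set.range ⇑b)) = {x | ∀ i, 0 < b.coord i x} :=
    b.interior_convexHull
  rw [hbcoe] at this
  rw [this, hexP]
  intro i
  have := b.coord_apply_combination_of_mem (Finset.mem_univ i) hwsum
  rw [hbcoe] at this
  rw [this]
  exact hpos _ i.2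

lemma aux_nonpos {wv uv c : ℝ} (hwv : wv < 0) (hc : 0 < c)
    (hmin : 0 < wv / uv → c ≤ wv / uv) : wv - c * uv ≤ 0 := by
  rcases lt_trichotomy uv 0 with h | h | h
  · have hr : 0 < wv / uv := div_pos_of_neg_of_neg hwv h
    have h2 := hmin hr
    have h3 : wv / uv * uv = wv := div_mul_cancel₀ _ (ne_of_lt h)
    nlinarith
  · rw [h]; linarith
  · nlinarith

lemma reduce_dep {d : ℕ} (S : Finset (Pt d)) :
    ∀ n : ℕ, ∀ (T : Finset (Pt d)) (w : Pt d → ℝ), T.card ≤ n →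
    (∀ v ∈ T, w v ≠ 0) → T.Nonempty →
    (∑ v ∈ T, w v) = 0 → (∑ v ∈ T, w v • v) = 0 →
    (∀ v ∈ T, 0 < w v → v ∈ S) →
    ∃ (T' : Finset (Pt d)) (w' : Pt d → ℝ), T' ⊆ T ∧ T'.card ≤ d + 2 ∧
      (∀ v ∈ T', w' v ≠ 0) ∧ T'.Nonempty ∧ (∑ v ∈ T', w' v) = 0 ∧
      (∑ v ∈ T', w' v • v) = 0 ∧ (∀ v ∈ T', 0 < w' v → v ∈ S) := by
  intro n
  induction n with
  | zero =>
    intro T w hcard hw hT _ _ _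
    exact absurd (Finset.card_pos.mpr hT) (by omega)
  | succ n ih =>
    intro T w hcard hw hT hsum hvec hpos
    by_cases hle : T.card ≤ d + 2
    · exact ⟨T, w, subset_rfl, hle, hw, hT, hsum, hvec, hpos⟩
    push_neg at hle
    -- set up the linear map whose kernel consists of affine dependences
    set ι := {x // x ∈ T} with hι
    let φ : (ι → ℝ) →ₗ[ℝ] (Pt d × ℝ) :=
      { toFun := fun u => (∑ i : ι, u i • (i : Pt d), ∑ i : ι, u i)
        map_add' := by
          intro u v
          simp [add_smul, Finset.sum_add_distrib, Prod.ext_iff]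
        map_smul' := by
          intro c u
          simp [smul_smul, Finset.smul_sum, Finset.mul_sum, Prod.ext_iff] }
    have hφ : ∀ u : ι → ℝ, u ∈ LinearMap.ker φ ↔
        (∑ i : ι, u i • (i : Pt d)) = 0 ∧ (∑ i : ι, u i) = 0 := by
      intro u
      rw [LinearMap.mem_ker]
      constructor
      · intro h
        exact ⟨congrArg Prod.fst h, congrArg Prod.snd h⟩
      · intro ⟨h1, h2⟩
        exact Prod.ext h1 h2
    set wT : ι → ℝ := fun i => w i with hwT
    have hwTker : wT ∈ LinearMap.ker φ := by
      rw [hφ]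
      constructor
      · rw [Finset.sum_coe_sort T (fun v => w v • v)]; exact hvec
      · rw [Finset.sum_coe_sort T (fun v => w v)]; exact hsum
    -- the kernel has dimension at least 2
    have hcardι : Fintype.card ι = T.card := Fintype.card_coe T
    have hrank : Module.finrank ℝ (ι → ℝ) = T.card := by
      rw [Module.finrank_fintype_fun_eq_card, hcardι]
    have hker2 : 2 ≤ Module.finrank ℝ (LinearMap.ker φ) := by
      have h1 := LinearMap.finrank_range_add_finrank_ker φ
      have h2 : Module.finrank ℝ (LinearMap.range φ) ≤ Module.finrank ℝ (Pt d × ℝ) :=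
        Submodule.finrank_le _
      have h3 : Module.finrank ℝ (Pt d × ℝ) = d + 1 := by
        rw [Module.finrank_prod, finrank_euclideanSpace_fin, Module.finrank_self]
      rw [hrank] at h1
      omega
    -- find an element of the kernel not proportional to wT
    have hnotle : ¬ (LinearMap.ker φ ≤ ℝ ∙ wT) := by
      intro hle'
      have h4 : Module.finrank ℝ (LinearMap.ker φ) ≤ Module.finrank ℝ (ℝ ∙ wT) :=
        Submodule.finrank_mono hle'
      have h5 : Module.finrank ℝ (ℝ ∙ wT) ≤ 1 := by
        by_cases hz : wT = 0
        · rw [hz, Submodule.span_zero_singleton, finrank_bot]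
          omega
        · rw [finrank_span_singleton hz]
      omega
    obtain ⟨u₀, hu₀ker, hu₀span⟩ := SetLike.not_le_iff_exists.mp hnotle
    clear hnotle
    have hu₀ne : u₀ ≠ 0 := fun h => hu₀span (h ▸ Submodule.zero_mem _)
    obtain ⟨i₁, hi₁⟩ : ∃ i : ι, u₀ i ≠ 0 := by
      by_contra hc
      push_neg at hc
      exact hu₀ne (funext fun i => hc i)
    -- normalize sign so some ratio is positive
    obtain ⟨u, huker, huspan, i₂, hi₂⟩ :
        ∃ u : ι → ℝ, u ∈ LinearMap.ker φ ∧ u ∉ (ℝ ∙ wT) ∧ ∃ i : ι, 0 < w ↑i / u i := by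
      rcases lt_trichotomy (w ↑i₁ / u₀ i₁) 0 with hlt | heq | hgt
      · refine ⟨-u₀, Submodule.neg_mem _ hu₀ker, ?_, i₁, ?_⟩
        · intro hmem
          exact hu₀span (by simpa using Submodule.neg_mem _ hmem)
        · rw [Pi.neg_apply, div_neg]
          linarith
      · exfalso
        have := hw ↑i₁ i₁.2
        have : w ↑i₁ / u₀ i₁ ≠ 0 := div_ne_zero this hi₁
        exact this heq
      · exact ⟨u₀, hu₀ker, hu₀span, i₁, hgt⟩
    -- the minimal positive ratio
    set R : Finset ι := Finset.univ.filter (fun i => 0 < w ↑i / u i) with hR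
    have hRne : R.Nonempty := ⟨i₂, by simp [hR, hi₂]⟩
    obtain ⟨i₀, hi₀R, hi₀min⟩ := Finset.exists_min_image R (fun i => w ↑i / u i) hRne
    have hi₀pos : 0 < w ↑i₀ / u i₀ := by
      have := Finset.mem_filter.mp hi₀R
      exact this.2
    set c : ℝ := w ↑i₀ / u i₀ with hc
    have hcpos : 0 < c := hi₀pos
    have hui₀ : u i₀ ≠ 0 := by
      intro h
      rw [hc, h, div_zero] at hi₀pos
      exact lt_irrefl 0 hi₀pos
    -- the extended perturbation and new weights
    set W : Pt d → ℝ := fun v => if h : v ∈ T then u ⟨v, h⟩ else 0 with hW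
    have hWi : ∀ i : ι, W ↑i = u i := by
      intro i
      simp only [hW, dif_pos i.2]; rfl
    set w' : Pt d → ℝ := fun v => w v - c * W v with hw'
    have hWsum : (∑ v ∈ T, W v) = 0 := by
      rw [← Finset.sum_coe_sort T (fun v => W v)]
      have := ((hφ u).mp huker).2
      calc (∑ i : ι, W ↑i) = ∑ i : ι, u i := by
            exact Finset.sum_congr rfl fun i _ => hWi i
        _ = 0 := this
    have hWvec : (∑ v ∈ T, W v • v) = 0 := by
      rw [← Finset.sum_coe_sort T (fun v => W v • v)]
      have := ((hφ u).mp huker).1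
      calc (∑ i : ι, W ↑i • (i : Pt d)) = ∑ i : ι, u i • (i : Pt d) := by
            exact Finset.sum_congr rfl fun i _ => by rw [hWi i]
        _ = 0 := this
    set T' : Finset (Pt d) := T.filter (fun v => w' v ≠ 0) with hT'
    have hT'sub : T' ⊆ T := Finset.filter_subset _ _
    have hzero : ∀ v ∈ T, v ∉ T' → w' v = 0 := by
      intro v hv hv'
      by_contra hne
      exact hv' (Finset.mem_filter.mpr ⟨hv, hne⟩)
    have hsum' : (∑ v ∈ T', w' v) = 0 := by
      rw [Finset.sum_subset hT'sub hzero]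
      have : (∑ v ∈ T, w' v) = (∑ v ∈ T, w v) - c * (∑ v ∈ T, W v) := by
        rw [Finset.mul_sum, ← Finset.sum_sub_distrib]
      rw [this, hsum, hWsum]; ring
    have hvec' : (∑ v ∈ T', w' v • v) = 0 := by
      have hz2 : ∀ v ∈ T, v ∉ T' → w' v • v = 0 := fun v hv hv' => by
        rw [hzero v hv hv', zero_smul]
      rw [Finset.sum_subset hT'sub hz2]
      have : (∑ v ∈ T, w' v • v) = (∑ v ∈ T, w v • v) - c • (∑ v ∈ T, W v • v) := by
        rw [Finset.smul_sum, ← Finset.sum_sub_distrib]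
        refine Finset.sum_congr rfl fun v _ => ?_
        rw [hw']
        rw [sub_smul, smul_smul]
      rw [this, hvec, hWvec]; simp
    -- i₀ is dropped
    have hi₀drop : (↑i₀ : Pt d) ∉ T' := by
      intro hmem
      have h0 : w' ↑i₀ = 0 := by
        rw [hw']
        simp only
        rw [hWi i₀, hc, div_mul_cancel₀ _ hui₀]
        ring
      exact (Finset.mem_filter.mp hmem).2 h0
    have hcardlt : T'.card < T.card := Finset.card_lt_card ⟨hT'sub, fun hsub2 => hi₀drop (hsub2 i₀.2)⟩
    -- T' is nonempty
    have hT'ne : T'.Nonempty := by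
      rw [Finset.nonempty_iff_ne_empty]
      intro hempty
      apply huspan
      have hall : ∀ i : ι, w ↑i = c * u i := by
        intro i
        have : w' ↑i = 0 := by
          by_contra hne
          have : (↑i : Pt d) ∈ T' := Finset.mem_filter.mpr ⟨i.2, hne⟩
          rw [hempty] at this
          exact absurd this (Finset.notMem_empty _)
        have h2 : w ↑i - c * W ↑i = 0 := this
        rw [hWi i] at h2
        linarith
      rw [Submodule.mem_span_singleton]
      refine ⟨c⁻¹, ?_⟩
      funext i
      rw [Pi.smul_apply, smul_eq_mul]
      show c⁻¹ * w ↑i = u i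
      rw [hall i]
      field_simp
    -- sign condition
    have hsign : ∀ v ∈ T', 0 < w' v → v ∈ S := by
      intro v hv hpos'
      have hvT : v ∈ T := hT'sub hv
      apply hpos v hvT
      by_contra hneg
      have hwv : w v ≠ 0 := hw v hvT
      have hwvneg : w v < 0 := lt_of_le_of_ne (not_lt.mp hneg) hwv
      have hWv : W v = u ⟨v, hvT⟩ := hWi ⟨v, hvT⟩
      have hmin : 0 < w v / u ⟨v, hvT⟩ → c ≤ w v / u ⟨v, hvT⟩ := by
        intro hrpos
        exact hi₀min ⟨v, hvT⟩ (Finset.mem_filter.mpr ⟨Finset.mem_univ _, hrpos⟩)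
      have hfin : w v - c * W v ≤ 0 := by
        rw [hWv]
        exact aux_nonpos hwvneg hcpos hmin
      have : w' v ≤ 0 := hfin
      linarith
    -- recurse
    have hwT' : ∀ v ∈ T', w' v ≠ 0 := fun v hv => (Finset.mem_filter.mp hv).2
    obtain ⟨T'', w'', h1, h2, h3, h4, h5, h6, h7⟩ :=
      ih T' w' (by omega) hwT' hT'ne hsum' hvec' hsign
    exact ⟨T'', w'', h1.trans hT'sub, h2, h3, h4, h5, h6, h7⟩

end AuxCrossing

/-- In a `d`-dimensional `t`-neighborly but not `(t+1)`-neighborly polytope on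
`2d` vertices in general position, some `t`-simplex and `(d-t)`-simplex spanned
by the vertices form a crossing pair. -/
theorem t_simplex_crossing_of_not_neighborly
    (t d : ℕ) (ht : 1 ≤ t) (hd : t + 2 ≤ d)
    (V : Finset (Pt d)) (hV : V.card = 2 * d) (hgp : GenPos d V)
    (hconv : ConvexPos d V) (hspan : affineSpan ℝ (V : Set (Pt d)) = ⊤)
    (hngh : Neighborly d t V) (hnot : ¬ Neighborly d (t + 1) V) :
    ∃ B C : Finset (Pt d), B ⊆ V ∧ C ⊆ V ∧ Disjoint B C ∧
      B.card = t + 1 ∧ C.card = d - t + 1 ∧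
      (intrinsicInterior ℝ (convexHull ℝ (B : Set (Pt d))) ∩
        intrinsicInterior ℝ (convexHull ℝ (C : Set (Pt d)))).Nonempty := by
  classical
  -- extract a non-face S₀
  rw [Neighborly] at hnot
  push_neg at hnot
  obtain ⟨S₀, hS₀V, hS₀card, hS₀notface⟩ := hnot
  -- a point in the affine span of S₀ and the convex hull of the rest
  obtain ⟨x, hxspan, hxhull⟩ :
      ∃ x : Pt d, x ∈ affineSpan ℝ (S₀ : Set (Pt d)) ∧
        x ∈ convexHull ℝ (((V \ S₀ : Finset (Pt d))) : Set (Pt d)) := by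
    by_contra hc
    push_neg at hc
    exact hS₀notface (faceOf_of_disjoint hS₀V hc)
  -- affine weights on S₀
  obtain ⟨μ, hμsum, hμvec, hμzero⟩ :
      ∃ μ : Pt d → ℝ, (∑ v ∈ S₀, μ v) = 1 ∧ (∑ v ∈ S₀, μ v • v) = x ∧
        (∀ v, v ∉ S₀ → μ v = 0) := by
    rw [← Subtype.range_coe (s := (S₀ : Set (Pt d)))] at hxspan
    obtain ⟨w', hw'sum, hw'x⟩ := eq_affineCombination_of_mem_affineSpan_of_fintype hxspan
    refine ⟨fun v => if h : v ∈ (S₀ : Set (Pt d)) then w' ⟨v, h⟩ else 0, ?_, ?_, ?_⟩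
    · rw [← Finset.sum_finset_coe]
      rw [← hw'sum]
      exact Finset.sum_congr rfl fun i _ => by simp
    · rw [← Finset.sum_finset_coe (f := fun v =>
        (if h : v ∈ (S₀ : Set (Pt d)) then w' ⟨v, h⟩ else 0) • v)]
      rw [hw'x, Finset.affineCombination_eq_linear_combination _ _ _ hw'sum]
      exact Finset.sum_congr rfl fun i _ => by simp
    · intro v hv
      simp [hv]
  -- convex weights on V \ S₀
  obtain ⟨l, hlnn, hlsum, hlvec⟩ := Finset.mem_convexHull'.mp hxhull
  -- the combined dependence
  set Wd : Pt d → ℝ := fun v => μ v - (if v ∈ V \ S₀ then l v else 0) with hWd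
  have hWdsum : (∑ v ∈ V, Wd v) = 0 := by
    have h1 : (∑ v ∈ V, μ v) = 1 := by
      rw [← Finset.sum_subset hS₀V (fun v _ hv => hμzero v hv)]
      exact hμsum
    have h2 : (∑ v ∈ V, if v ∈ V \ S₀ then l v else 0) = 1 := by
      rw [Finset.sum_ite_mem, Finset.inter_eq_right.mpr (Finset.sdiff_subset)]
      exact hlsum
    rw [hWd]
    rw [Finset.sum_sub_distrib, h1, h2]
    ring
  have hWdvec : (∑ v ∈ V, Wd v • v) = 0 := by
    have h1 : (∑ v ∈ V, μ v • v) = x := by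
      rw [← Finset.sum_subset hS₀V (f := fun v => μ v • v)
        (fun v _ hv => by show μ v • v = 0; rw [hμzero v hv, zero_smul])]
      exact hμvec
    have h2 : (∑ v ∈ V, (if v ∈ V \ S₀ then l v else 0) • v) = x := by
      have : ∀ v ∈ V, (if v ∈ V \ S₀ then l v else 0) • v
          = (if v ∈ V \ S₀ then l v • v else 0) := by
        intro v _
        split <;> simp
      rw [Finset.sum_congr rfl this, Finset.sum_ite_mem,
        Finset.inter_eq_right.mpr (Finset.sdiff_subset)]
      exact hlvec
    calc (∑ v ∈ V, Wd v • v)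
        = (∑ v ∈ V, μ v • v) - (∑ v ∈ V, (if v ∈ V \ S₀ then l v else 0) • v) := by
          rw [← Finset.sum_sub_distrib]
          exact Finset.sum_congr rfl fun v _ => by rw [hWd, sub_smul]
      _ = 0 := by rw [h1, h2, sub_self]
  set T₀ : Finset (Pt d) := V.filter (fun v => Wd v ≠ 0) with hT₀
  have hT₀V : T₀ ⊆ V := Finset.filter_subset _ _
  have hT₀zero : ∀ v ∈ V, v ∉ T₀ → Wd v = 0 := by
    intro v hv hv'
    by_contra hne
    exact hv' (Finset.mem_filter.mpr ⟨hv, hne⟩)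
  have hT₀sum : (∑ v ∈ T₀, Wd v) = 0 := by
    rw [Finset.sum_subset hT₀V hT₀zero]; exact hWdsum
  have hT₀vec : (∑ v ∈ T₀, Wd v • v) = 0 := by
    rw [Finset.sum_subset hT₀V (fun v hv hv' => by rw [hT₀zero v hv hv', zero_smul])]
    exact hWdvec
  have hT₀ne : T₀.Nonempty := by
    obtain ⟨y, hy, hly⟩ : ∃ y ∈ V \ S₀, l y ≠ 0 := by
      by_contra hc
      push_neg at hc
      rw [Finset.sum_eq_zero hc] at hlsum
      norm_num at hlsum
    have hyS₀ : y ∉ S₀ := (Finset.mem_sdiff.mp hy).2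
    have hyV : y ∈ V := (Finset.mem_sdiff.mp hy).1
    have : Wd y ≠ 0 := by
      have hWdy : Wd y = μ y - l y := by
        show μ y - (if y ∈ V \ S₀ then l y else 0) = μ y - l y
        rw [if_pos hy]
      rw [hWdy, hμzero y hyS₀]
      intro h
      apply hly
      linarith
    exact ⟨y, Finset.mem_filter.mpr ⟨hyV, this⟩⟩
  have hT₀pos : ∀ v ∈ T₀, 0 < Wd v → v ∈ S₀ := by
    intro v hv hpos
    by_contra hvS
    have h1 : μ v = 0 := hμzero v hvS
    have h2 : (0:ℝ) ≤ (if v ∈ V \ S₀ then l v else 0) := by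
      split
      · exact hlnn v (by assumption)
      · exact le_rfl
    have hval : Wd v = μ v - (if v ∈ V \ S₀ then l v else 0) := rfl
    rw [hval, h1] at hpos
    linarith
  -- reduce to a small dependence
  obtain ⟨T, w, hTT₀, hTcard, hTw, hTne, hTsum, hTvec, hTpos⟩ :=
    reduce_dep S₀ T₀.card T₀ Wd le_rfl (fun v hv => (Finset.mem_filter.mp hv).2)
      hT₀ne hT₀sum hT₀vec hT₀pos
  have hTV : T ⊆ V := hTT₀.trans hT₀V
  -- positive and negative parts
  set B : Finset (Pt d) := T.filter (fun v => 0 < w v) with hB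
  set C : Finset (Pt d) := T.filter (fun v => w v < 0) with hC
  have hBV : B ⊆ V := (Finset.filter_subset _ _).trans hTV
  have hCV : C ⊆ V := (Finset.filter_subset _ _).trans hTV
  have hBC : Disjoint B C := by
    rw [Finset.disjoint_left]
    intro v hvB hvC
    have h1 := (Finset.mem_filter.mp hvB).2
    have h2 := (Finset.mem_filter.mp hvC).2
    linarith
  have hBCunion : B ∪ C = T := by
    ext v
    rw [Finset.mem_union, hB, hC, Finset.mem_filter, Finset.mem_filter]
    constructor
    · rintro (⟨h, _⟩ | ⟨h, _⟩) <;> exact h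
    · intro hv
      rcases lt_trichotomy (w v) 0 with h | h | h
      · exact Or.inr ⟨hv, h⟩
      · exact absurd h (hTw v hv)
      · exact Or.inl ⟨hv, h⟩
  have hBsub : B ⊆ S₀ := fun v hv =>
    hTpos v (Finset.mem_filter.mp hv).1 (Finset.mem_filter.mp hv).2
  have hBne : B.Nonempty := by
    rw [Finset.nonempty_iff_ne_empty]
    intro hempty
    have hall : ∀ v ∈ T, w v < 0 := by
      intro v hv
      rcases lt_trichotomy (w v) 0 with h | h | h
      · exact h
      · exact absurd h (hTw v hv)
      · have hvB : v ∈ B := Finset.mem_filter.mpr ⟨hv, h⟩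
        rw [hempty] at hvB
        exact absurd hvB (Finset.notMem_empty v)
    have : (∑ v ∈ T, w v) < 0 := by
      have := Finset.sum_lt_sum_of_nonempty hTne (g := fun _ => (0:ℝ)) hall
      simpa using this
    linarith [hTsum]
  have hCne : C.Nonempty := by
    rw [Finset.nonempty_iff_ne_empty]
    intro hempty
    have hall : ∀ v ∈ T, 0 < w v := by
      intro v hv
      rcases lt_trichotomy (w v) 0 with h | h | h
      · have hvC : v ∈ C := Finset.mem_filter.mpr ⟨hv, h⟩
        rw [hempty] at hvC
        exact absurd hvC (Finset.notMem_empty v)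
      · exact absurd h (hTw v hv)
      · exact h
    have : (0:ℝ) < ∑ v ∈ T, w v := Finset.sum_pos hall hTne
    linarith [hTsum]
  -- sum splitting
  have hsplitsum : (∑ v ∈ B, w v) + (∑ v ∈ C, w v) = 0 := by
    rw [← Finset.sum_union hBC, hBCunion]; exact hTsum
  have hsplitvec : (∑ v ∈ B, w v • v) + (∑ v ∈ C, w v • v) = 0 := by
    rw [← Finset.sum_union hBC, hBCunion]; exact hTvec
  set σ : ℝ := ∑ v ∈ B, w v with hσ
  have hσpos : 0 < σ :=
    Finset.sum_pos (fun v hv => (Finset.mem_filter.mp hv).2) hBne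
  -- B has exactly t + 1 elements
  have hBcard1 : B.card ≤ t + 1 := le_trans (Finset.card_le_card hBsub) hS₀card
  have hBcard2 : t + 1 ≤ B.card := by
    by_contra hcon
    push_neg at hcon
    obtain ⟨-, f, a, hfa, hflt⟩ := hngh B hBV (by omega)
    have h1 : f (∑ v ∈ B, w v • v) = σ * a := by
      rw [map_sum]
      rw [hσ, Finset.sum_mul]
      refine Finset.sum_congr rfl fun v hv => ?_
      rw [map_smul, hfa v hv, smul_eq_mul]
    have h2 : f (∑ v ∈ B, w v • v) = ∑ v ∈ C, (-(w v)) * f v := by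
      have : (∑ v ∈ B, w v • v) = ∑ v ∈ C, (-(w v)) • v := by
        have hBeq : (∑ v ∈ B, w v • v) = -(∑ v ∈ C, w v • v) :=
          eq_neg_of_add_eq_zero_left hsplitvec
        rw [hBeq, ← Finset.sum_neg_distrib]
        exact Finset.sum_congr rfl fun v _ => by rw [neg_smul]
      rw [this, map_sum]
      exact Finset.sum_congr rfl fun v hv => by rw [map_smul, smul_eq_mul]
    have h3 : (∑ v ∈ C, (-(w v)) * f v) < ∑ v ∈ C, (-(w v)) * a := by
      refine Finset.sum_lt_sum_of_nonempty hCne fun v hv => ?_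
      have hwv : w v < 0 := (Finset.mem_filter.mp hv).2
      have hfv : f v < a := by
        apply hflt v (hCV hv)
        intro hvB
        exact absurd ((Finset.mem_filter.mp hvB).2) (by linarith)
      have : 0 < -(w v) := by linarith
      exact mul_lt_mul_of_pos_left hfv this
    have h4 : (∑ v ∈ C, (-(w v)) * a) = σ * a := by
      have h4a : (∑ v ∈ C, -(w v)) = -(∑ v ∈ C, w v) := Finset.sum_neg_distrib _
      rw [← Finset.sum_mul, h4a]
      have h4b : -(∑ v ∈ C, w v) = σ := by linarith [hsplitsum]
      rw [h4b]
    linarith [h1, h2, h3, h4]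
  have hBcard : B.card = t + 1 := le_antisymm hBcard1 hBcard2
  -- T has at least d + 2 elements
  have hTlarge : d + 2 ≤ T.card := by
    by_contra hcon
    push_neg at hcon
    have hind := hgp T hTV (by omega)
    obtain ⟨b, hbB⟩ := hBne
    have hbT : b ∈ T := (Finset.mem_filter.mp hbB).1
    have hsum0 : (∑ i : {x // x ∈ (T : Set (Pt d))}, w ↑i) = 0 := by
      rw [Finset.sum_finset_coe]; exact hTsum
    have hvsub : Finset.univ.weightedVSub ((↑) : {x // x ∈ (T : Set (Pt d))} → Pt d)
        (fun i => w ↑i) = 0 := by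
      rw [Finset.weightedVSub_eq_linear_combination _ hsum0]
      rw [Finset.sum_finset_coe (f := fun v => w v • v)]
      exact hTvec
    have := hind Finset.univ (fun i => w ↑i) hsum0 hvsub ⟨b, hbT⟩ (Finset.mem_univ _)
    exact (hTw b hbT) this
  have hTcard' : T.card = d + 2 := le_antisymm hTcard hTlarge
  have hCcard : C.card = d - t + 1 := by
    have : B.card + C.card = T.card := by
      rw [← Finset.card_union_of_disjoint hBC, hBCunion]
    omega
  -- the common point of the two relative interiors
  have hBind := hgp B hBV (by omega)
  have hCind := hgp C hCV (by omega)
  set x₀ : Pt d := ∑ v ∈ B, (w v / σ) • v with hx₀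
  have hx₀B : x₀ ∈ intrinsicInterior ℝ (convexHull ℝ (B : Set (Pt d))) := by
    rw [hx₀]
    apply mem_intrinsicInterior_of_pos B hBind hBne
    · intro v hv
      exact div_pos ((Finset.mem_filter.mp hv).2) hσpos
    · rw [← Finset.sum_div, ← hσ, div_self (ne_of_gt hσpos)]
  have hx₀eq : x₀ = ∑ v ∈ C, (-(w v) / σ) • v := by
    rw [hx₀]
    have h1 : (∑ v ∈ B, (w v / σ) • v) = σ⁻¹ • (∑ v ∈ B, w v • v) := by
      rw [Finset.smul_sum]
      exact Finset.sum_congr rfl fun v _ => by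
        rw [smul_smul, div_eq_inv_mul]
    have h2 : (∑ v ∈ C, (-(w v) / σ) • v) = σ⁻¹ • (∑ v ∈ C, (-(w v)) • v) := by
      rw [Finset.smul_sum]
      exact Finset.sum_congr rfl fun v _ => by
        rw [smul_smul, div_eq_inv_mul]
    rw [h1, h2]
    congr 1
    have : (∑ v ∈ C, (-(w v)) • v) = -(∑ v ∈ C, w v • v) := by
      rw [← Finset.sum_neg_distrib]
      exact Finset.sum_congr rfl fun v _ => by rw [neg_smul]
    rw [this]
    exact eq_neg_of_add_eq_zero_left hsplitvec
  have hx₀C : x₀ ∈ intrinsicInterior ℝ (convexHull ℝ (C : Set (Pt d))) := by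
    rw [hx₀eq]
    apply mem_intrinsicInterior_of_pos C hCind hCne
    · intro v hv
      have : w v < 0 := (Finset.mem_filter.mp hv).2
      apply div_pos (by linarith) hσpos
    · have h5 : (∑ v ∈ C, -(w v) / σ) = (∑ v ∈ C, -(w v)) / σ := by
        rw [Finset.sum_div]
      rw [h5]
      have h6 : (∑ v ∈ C, -(w v)) = σ := by
        have h6a : (∑ v ∈ C, -(w v)) = -(∑ v ∈ C, w v) := Finset.sum_neg_distrib _
        rw [h6a]; linarith [hsplitsum]
      rw [h6, div_self (ne_of_gt hσpos)]
  exact ⟨B, C, hBV, hCV, hBC, hBcard, hCcard, ⟨x₀, hx₀B, hx₀C⟩⟩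
end
end
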